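/- arXiv:2505.06631 — 9 statements merged into one kernel-verified Lean document; each statement's English description precedes it below -/
import Mathlib

section
/- For integers d2 ≥ d1 ≥ 2, the quadratic polynomial P̃_X(k) = d2(d1·d2 - 2d1 - d2 + 1)k² + 2(d2 - 1)(d1 - 1)d1·k + d1²(d1 - 1) has a root k* in the open interval (-d1/d2, 0), and P̃_X is negative on [-d1/d2, k*) and positive on (k*, 1). -/
/-!
On `[-d1/d2, 1]` the quadratic `P̃_X` is strictly increasing: its derivative is affine, equal to
`2 d1² > 0` at `-d1/d2` and nonnegative at `1`. Since `P̃_X(-d1/d2) = -d1²/d2 < 0 < d1²(d1 - 1) = P̃_X(0)`,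
the intermediate value theorem gives the root `k*`, and monotonicity gives the signs around it.
-/

open Set

theorem strictMonoOn_quadratic {A B C l r : ℝ} (hl : 0 < 2 * A * l + B) (hr : 0 ≤ 2 * A * r + B) :
    StrictMonoOn (fun x => A * x ^ 2 + B * x + C) (Icc l r) := by
  rintro x ⟨hlx, -⟩ y ⟨-, hyr⟩ hxy
  -- `(2r - 2l)(A(x + y) + B)` is a positive combination of the derivatives at `l` and `r`
  have hslope : 0 < A * (x + y) + B := by
    have hlr : 0 < r - l := by linarith
    have hcombo : 2 * (r - l) * (A * (x + y) + B)
        = (2 * r - (x + y)) * (2 * A * l + B) + ((x + y) - 2 * l) * (2 * A * r + B) := by ring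
    have : 0 < 2 * (r - l) * (A * (x + y) + B) := by
      rw [hcombo]
      exact add_pos_of_pos_of_nonneg (mul_pos (by linarith) hl) (mul_nonneg (by linarith) hr)
    exact pos_of_mul_pos_right this (by positivity)
  have hdiff : (A * y ^ 2 + B * y + C) - (A * x ^ 2 + B * x + C) = (y - x) * (A * (x + y) + B) := by
    ring
  have : 0 < (y - x) * (A * (x + y) + B) := mul_pos (by linarith) hslope
  dsimp only
  linarith

theorem exists_sign_change_of_strictMonoOn {f : ℝ → ℝ} {l m r : ℝ} (hf : StrictMonoOn f (Icc l r))
    (hcont : ContinuousOn f (Icc l m)) (hlm : l ≤ m) (hmr : m ≤ r) (hl : f l < 0) (hm : 0 < f m) :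
    ∃ c ∈ Ioo l m, f c = 0 ∧ (∀ x ∈ Ico l c, f x < 0) ∧ (∀ x ∈ Ioc c r, 0 < f x) := by
  obtain ⟨c, ⟨hlc, hcm⟩, hc⟩ := intermediate_value_Ioo hlm hcont ⟨hl, hm⟩
  have hcI : c ∈ Icc l r := ⟨hlc.le, by linarith⟩
  refine ⟨c, ⟨hlc, hcm⟩, hc, ?_, ?_⟩
  · rintro x ⟨hlx, hxc⟩
    exact hc ▸ hf ⟨hlx, by linarith⟩ hcI hxc
  · rintro x ⟨hcx, hxr⟩
    exact hc ▸ hf hcI ⟨by linarith, hxr⟩ hcx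

/-- The paper's `P̃_X(k)`, with `a = d1` and `b = d2`. -/
def tildePX (a b k : ℝ) : ℝ :=
  b * (a * b - 2 * a - b + 1) * k ^ 2 + 2 * (b - 1) * (a - 1) * a * k + a ^ 2 * (a - 1)

theorem tildePX_neg_div {a b : ℝ} (hb : b ≠ 0) : tildePX a b (-a / b) = -a ^ 2 / b := by
  unfold tildePX
  field_simp
  ring

theorem tildePX_strictMonoOn {a b : ℝ} (ha : 2 ≤ a) (hab : a ≤ b) :
    StrictMonoOn (tildePX a b) (Icc (-a / b) 1) := by
  have hb : 0 < b := by linarith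
  refine strictMonoOn_quadratic (C := a ^ 2 * (a - 1)) ?_ ?_
  · have : 2 * (b * (a * b - 2 * a - b + 1)) * (-a / b) + 2 * (b - 1) * (a - 1) * a = 2 * a ^ 2 := by
      field_simp
      ring
    rw [this]
    positivity
  · nlinarith [mul_nonneg (sub_nonneg.2 ha) (sub_nonneg.2 (ha.trans hab)), sq_nonneg (a - b)]

theorem exists_root_tildePX {a b : ℝ} (ha : 2 ≤ a) (hab : a ≤ b) :
    ∃ kstar : ℝ, -a / b < kstar ∧ kstar < 0 ∧ tildePX a b kstar = 0 ∧
      (∀ k : ℝ, -a / b ≤ k → k < kstar → tildePX a b k < 0) ∧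
      (∀ k : ℝ, kstar < k → k < 1 → 0 < tildePX a b k) := by
  have hb : 0 < b := by linarith
  have hleft : tildePX a b (-a / b) < 0 := by
    rw [tildePX_neg_div hb.ne', neg_div, neg_lt_zero]
    positivity
  have hzero : 0 < tildePX a b 0 := by
    simp only [tildePX]
    nlinarith
  have hcont : ContinuousOn (tildePX a b) (Icc (-a / b) 0) := by
    unfold tildePX
    fun_prop
  obtain ⟨c, ⟨hlc, hc0⟩, hc, hneg, hpos⟩ :=
    exists_sign_change_of_strictMonoOn (tildePX_strictMonoOn ha hab) hcont
      (div_nonpos_of_nonpos_of_nonneg (by linarith) hb.le) zero_le_one hleft hzero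
  exact ⟨c, hlc, hc0, hc, fun k hl hk => hneg k ⟨hl, hk⟩,
    fun k hk hk1 => hpos k ⟨hk, hk1.le⟩⟩

/-- For integers d2 ≥ d1 ≥ 2, the quadratic
P̃_X(k) = d2(d1·d2 - 2d1 - d2 + 1)k² + 2(d2-1)(d1-1)d1·k + d1²(d1-1)
has a root k* in (-d1/d2, 0), is negative on [-d1/d2, k*) and positive on (k*, 1). -/
theorem stmt_0 (d1 d2 : ℕ) (h1 : 2 ≤ d1) (h2 : d1 ≤ d2) :
    ∃ kstar : ℝ, -(d1 : ℝ)/d2 < kstar ∧ kstar < 0 ∧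
      ((d2 : ℝ) * (d1*d2 - 2*d1 - d2 + 1) * kstar^2
        + 2*(d2 - 1)*(d1 - 1)*d1 * kstar + d1^2*(d1 - 1) = 0) ∧
      (∀ k : ℝ, -(d1 : ℝ)/d2 ≤ k → k < kstar →
        (d2 : ℝ) * (d1*d2 - 2*d1 - d2 + 1) * k^2
          + 2*(d2 - 1)*(d1 - 1)*d1 * k + d1^2*(d1 - 1) < 0) ∧
      (∀ k : ℝ, kstar < k → k < 1 →
        0 < (d2 : ℝ) * (d1*d2 - 2*d1 - d2 + 1) * k^2
          + 2*(d2 - 1)*(d1 - 1)*d1 * k + d1^2*(d1 - 1)) :=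
  exists_root_tildePX (by exact_mod_cast h1) (by exact_mod_cast h2)
end

section
/- For integers d2 ≥ d1 ≥ 2, with P̃_X(k) = d2(d1·d2 - 2d1 - d2 + 1)k² + 2(d2-1)(d1-1)d1·k + d1²(d1-1), one has P̃_X(-(d1-1)/d2) > 0; hence the root k* of P̃_X lying in (-d1/d2, 0) satisfies k* < -(d1-1)/d2. -/
/-!
With `u = d₂ k`, the cleared polynomial `d₂ · P̃_X(k)` splits as
`-d₁ (u + d₁ - 1) u - (d₁ + d₂ - 1)(u + d₁) u + d₁ d₂ (u + d₁)(u + d₁ - 1)`,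
and every summand is nonnegative, the middle one positive, for `-(d₁ - 1) ≤ u < 0`.
So `P̃_X` has no root in `[-(d₁ - 1)/d₂, 0)`; at the left endpoint its value is
`(d₁ - 1)(d₁ + d₂ - 1)/d₂ > 0`.
-/

/-- The polynomial `P̃_X` with real parameters `a = d₁`, `b = d₂`. -/
def pTildeX (a b k : ℝ) : ℝ :=
  b * (a * b - 2 * a - b + 1) * k ^ 2 + 2 * (b - 1) * (a - 1) * a * k + a ^ 2 * (a - 1)

section

variable {a b : ℝ}

theorem pTildeX_neg_div (hb : b ≠ 0) :
    pTildeX a b (-(a - 1) / b) = (a - 1) * (a + b - 1) / b := by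
  unfold pTildeX
  field_simp
  ring

theorem pTildeX_neg_div_pos (ha : 1 < a) (hb : 0 < b) : 0 < pTildeX a b (-(a - 1) / b) := by
  rw [pTildeX_neg_div hb.ne']
  have : 0 < a + b - 1 := by linarith
  positivity

theorem mul_pTildeX_eq (a b k : ℝ) :
    b * pTildeX a b k =
      -a * (b * k + a - 1) * (b * k) - (a + b - 1) * (b * k + a) * (b * k)
        + a * b * (b * k + a) * (b * k + a - 1) := by
  unfold pTildeX
  ring

theorem pTildeX_pos_of_mem_Ico (ha : 1 ≤ a) (hb : 0 < b) {k : ℝ}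
    (hk : k ∈ Set.Ico (-(a - 1) / b) 0) : 0 < pTildeX a b k := by
  obtain ⟨hk_left, hk_neg⟩ := hk
  have hu_left : 0 ≤ b * k + a - 1 := by
    have := (div_le_iff₀ hb).mp hk_left
    linarith
  have hu_neg : 0 < -(b * k) := by nlinarith
  have hsum : 0 < b * pTildeX a b k := by
    rw [mul_pTildeX_eq]
    have h₁ : 0 ≤ a * (b * k + a - 1) * -(b * k) := by positivity
    have h₂ : 0 < (a + b - 1) * (b * k + a) * -(b * k) := by
      have : 0 < a + b - 1 := by linarith
      have : 0 < b * k + a := by linarith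
      positivity
    have h₃ : 0 ≤ a * b * (b * k + a) * (b * k + a - 1) := by
      have : 0 ≤ b * k + a := by linarith
      positivity
    linarith
  exact pos_of_mul_pos_right hsum hb.le

theorem lt_neg_div_of_pTildeX_eq_zero (ha : 1 ≤ a) (hb : 0 < b) {k : ℝ} (hk_neg : k < 0)
    (hroot : pTildeX a b k = 0) : k < -(a - 1) / b := by
  by_contra! hk
  exact (pTildeX_pos_of_mem_Ico ha hb ⟨hk, hk_neg⟩).ne' hroot

end

/-- P̃_X(-(d1-1)/d2) > 0, hence any root k* of P̃_X in (-d1/d2, 0) satisfies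
k* < -(d1-1)/d2. -/
theorem stmt_1 (d1 d2 : ℕ) (h1 : 2 ≤ d1) (h2 : d1 ≤ d2) :
    (0 < (d2 : ℝ) * (d1*d2 - 2*d1 - d2 + 1) * (-((d1 : ℝ) - 1)/d2)^2
        + 2*(d2 - 1)*(d1 - 1)*d1 * (-((d1 : ℝ) - 1)/d2) + d1^2*(d1 - 1)) ∧
    (∀ kstar : ℝ, -(d1 : ℝ)/d2 < kstar → kstar < 0 →
      (d2 : ℝ) * (d1*d2 - 2*d1 - d2 + 1) * kstar^2
        + 2*(d2 - 1)*(d1 - 1)*d1 * kstar + d1^2*(d1 - 1) = 0 →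
      kstar < -((d1 : ℝ) - 1)/d2) := by
  have ha : (1 : ℝ) < d1 := by exact_mod_cast h1
  have hb : (0 : ℝ) < d2 := by exact_mod_cast (by omega : 0 < d2)
  exact ⟨pTildeX_neg_div_pos ha hb,
    fun _ _ hk_neg hroot => lt_neg_div_of_pTildeX_eq_zero ha.le hb hk_neg hroot⟩
end

section
/- For integers d2 ≥ d1 ≥ 2 and any real k ∈ [-d1/d2, 1], the cubic ω₂(k) = (2d1²d2² - d1d2³ + d2³ - d2²)k³ + (4d1³d2 - 4d1²d2² - 2d1²d2 + 4d1d2² - 2d1d2)k² + (2d1⁴ - 5d1³d2 - 2d1³ + 5d1²d2)k - 2d1⁴ + 2d1³ is strictly negative. -/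
/-!
Write `a = d1`, `b = d2` and substitute `u = b k + a`, which runs over `[0, a + b]`. Then
`b ω₂(k) = -P(u)` with `P(u) = -C u³ + a (2M + C) u² - a² (2a + 1) u + a³`, where
`M = ab + a - b` and `C = 2a² - ab + b - 1`, and `P` is positive on `[0, a + b]`:
* if `C ≤ 0`, then `P(u) = a Q'(u) - C u³` with `Q'(u) = (2M + C) u² - a (2a + 1) u + a²`;
* if `C ≥ 0` and `u ≤ a`, then `P(u) = a Q(u) + C u² (a - u)` with `Q(u) = 2M u² - a (2a + 1) u + a²`;
* if `C ≥ 0` and `u ≥ a`, then `P(u) = u R(u) + a³`, where `R(u) = -C u² + a (2M + C) u - a² (2a + 1)`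
  is concave and positive at both ends of `[a, a + b]`.
The quadratics `Q` and `Q'` have negative discriminant.
-/

theorem quadratic_pos_of_discrim_neg {K : Type*} [Field K] [LinearOrder K] [IsStrictOrderedRing K]
    {p q r : K} (hp : 0 < p) (h : discrim p q r < 0) (x : K) : 0 < p * (x * x) + q * x + r := by
  have hsq : 4 * p * (p * (x * x) + q * x + r) = (2 * p * x + q) ^ 2 - discrim p q r := by
    rw [discrim]; ring
  have : 0 < 4 * p * (p * (x * x) + q * x + r) := by
    rw [hsq]; linarith [sq_nonneg (2 * p * x + q)]
  exact pos_of_mul_pos_right this (by positivity)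

def omega₂ (a b k : ℝ) : ℝ :=
  (2*a^2*b^2 - a*b^3 + b^3 - b^2) * k^3
    + (4*a^3*b - 4*a^2*b^2 - 2*a^2*b + 4*a*b^2 - 2*a*b) * k^2
    + (2*a^4 - 5*a^3*b - 2*a^3 + 5*a^2*b) * k
    - 2*a^4 + 2*a^3

def shiftedCubic (a b u : ℝ) : ℝ :=
  -(2*a^2 - a*b + b - 1) * u^3 + a * (2*a^2 + a*b + 2*a - b - 1) * u^2 - a^2 * (2*a + 1) * u + a^3

theorem mul_omega₂ (a b k : ℝ) : b * omega₂ a b k = -shiftedCubic a b (b*k + a) := by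
  unfold omega₂ shiftedCubic; ring

section shiftedCubic

variable {a b u : ℝ}

theorem shiftedCubic_pos_of_coeff_nonpos (ha : 1 ≤ a)
    (hC : 2*a^2 - a*b + b - 1 ≤ 0) (hu : 0 ≤ u) : 0 < shiftedCubic a b u := by
  have hQ : 0 < (2*a^2 + a*b + 2*a - b - 1) * (u * u) + (-a * (2*a + 1)) * u + a^2 := by
    apply quadratic_pos_of_discrim_neg
    · nlinarith
    · have : discrim (2*a^2 + a*b + 2*a - b - 1) (-a * (2*a + 1)) (a^2)
          = -a^2 * (4*a^2 + 4*a - 5 + 4*b*(a - 1)) := by rw [discrim]; ring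
      rw [this]
      exact mul_neg_of_neg_of_pos (by nlinarith) (by nlinarith)
  have hcube : 0 ≤ -(2*a^2 - a*b + b - 1) * u^3 := mul_nonneg (by linarith) (by positivity)
  have : shiftedCubic a b u
      = a * ((2*a^2 + a*b + 2*a - b - 1) * (u * u) + (-a * (2*a + 1)) * u + a^2)
        + -(2*a^2 - a*b + b - 1) * u^3 := by
    unfold shiftedCubic; ring
  rw [this]
  exact add_pos_of_pos_of_nonneg (mul_pos (by linarith) hQ) hcube

theorem shiftedCubic_pos_of_le (ha : 2 ≤ a) (hab : a ≤ b)
    (hC : 0 ≤ 2*a^2 - a*b + b - 1) (hua : u ≤ a) : 0 < shiftedCubic a b u := by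
  have hQ : 0 < (2 * (a*b + a - b)) * (u * u) + (-a * (2*a + 1)) * u + a^2 := by
    apply quadratic_pos_of_discrim_neg
    · nlinarith
    · have : discrim (2 * (a*b + a - b)) (-a * (2*a + 1)) (a^2)
          = -a^2 * (8*b*(a - 1) - 4*a^2 + 4*a - 1) := by rw [discrim]; ring
      rw [this]
      exact mul_neg_of_neg_of_pos (by nlinarith)
        (by nlinarith [mul_le_mul_of_nonneg_right hab (by linarith : (0:ℝ) ≤ a - 1)])
  have htail : 0 ≤ (2*a^2 - a*b + b - 1) * u^2 * (a - u) :=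
    mul_nonneg (mul_nonneg hC (sq_nonneg u)) (sub_nonneg.2 hua)
  have : shiftedCubic a b u
      = a * ((2 * (a*b + a - b)) * (u * u) + (-a * (2*a + 1)) * u + a^2)
        + (2*a^2 - a*b + b - 1) * u^2 * (a - u) := by
    unfold shiftedCubic; ring
  rw [this]
  exact add_pos_of_pos_of_nonneg (mul_pos (by linarith) hQ) htail

theorem shiftedCubic_pos_of_ge (ha : 2 ≤ a) (hab : a ≤ b)
    (hC : 0 ≤ 2*a^2 - a*b + b - 1) (hau : a ≤ u) (hu : u ≤ a + b) : 0 < shiftedCubic a b u := by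
  set R : ℝ → ℝ := fun x ↦
    -(2*a^2 - a*b + b - 1) * x^2 + a * (2*a^2 + a*b + 2*a - b - 1) * x - a^2 * (2*a + 1) with hR
  have hRa : 0 < R a := by
    have : R a = a^2 * (2*b*(a - 1) - 1) := by simp only [hR]; ring
    rw [this]
    exact mul_pos (by positivity) (by nlinarith)
  have hRab : 0 < R (a + b) := by
    have : R (a + b) = (a + b) * (2*a^2 - 2*a*b + b + b^2*(a - 1)) - a^2 * (2*a + 1) := by
      simp only [hR]; ring
    rw [this]
    -- In the variables `a - 2` and `b - a` every coefficient is positive.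
    obtain ⟨t, ht, rfl⟩ : ∃ t, 0 ≤ t ∧ b = a + t := ⟨b - a, by linarith, by ring⟩
    obtain ⟨s, hs, rfl⟩ : ∃ s, 0 ≤ s ∧ a = 2 + s := ⟨a - 2, by linarith, by ring⟩
    ring_nf
    positivity
  -- `R` is concave, so it lies above its chord over `[a, a + b]`.
  have hchord : b * R u
      = (a + b - u) * R a + (u - a) * R (a + b)
        + b * (2*a^2 - a*b + b - 1) * (u - a) * (a + b - u) := by
    simp only [hR]; ring
  have hRu : 0 ≤ R u := by
    have hb : 0 < b := by linarith
    have hleft : 0 ≤ u - a := sub_nonneg.2 hau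
    have hright : 0 ≤ a + b - u := by linarith
    have : 0 ≤ b * R u := by
      rw [hchord]
      exact add_nonneg (add_nonneg (mul_nonneg hright hRa.le) (mul_nonneg hleft hRab.le))
        (mul_nonneg (mul_nonneg (mul_nonneg hb.le hC) hleft) hright)
    exact nonneg_of_mul_nonneg_right this hb
  have : shiftedCubic a b u = u * R u + a^3 := by
    simp only [hR, shiftedCubic]; ring
  rw [this]
  exact add_pos_of_nonneg_of_pos (mul_nonneg (by linarith) hRu) (by positivity)

theorem shiftedCubic_pos (ha : 2 ≤ a) (hab : a ≤ b) (hu0 : 0 ≤ u) (hu : u ≤ a + b) :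
    0 < shiftedCubic a b u := by
  rcases le_total (2*a^2 - a*b + b - 1) 0 with hC | hC
  · exact shiftedCubic_pos_of_coeff_nonpos (by linarith) hC hu0
  rcases le_total u a with hua | hau
  · exact shiftedCubic_pos_of_le ha hab hC hua
  · exact shiftedCubic_pos_of_ge ha hab hC hau hu

end shiftedCubic

theorem omega₂_neg {a b k : ℝ} (ha : 2 ≤ a) (hab : a ≤ b) (hk1 : -a / b ≤ k) (hk2 : k ≤ 1) :
    omega₂ a b k < 0 := by
  have hb : 0 < b := by linarith
  have hu0 : 0 ≤ b * k + a := by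
    have := (div_le_iff₀ hb).1 hk1
    linarith
  have hP := shiftedCubic_pos ha hab hu0 (by nlinarith)
  have : b * omega₂ a b k < 0 := by rw [mul_omega₂]; linarith
  exact neg_of_mul_neg_right this hb.le

/-- ω₂(k) < 0 for k ∈ [-d1/d2, 1]. -/
theorem stmt_4 (d1 d2 : ℕ) (h1 : 2 ≤ d1) (h2 : d1 ≤ d2) (k : ℝ)
    (hk1 : -(d1 : ℝ)/d2 ≤ k) (hk2 : k ≤ 1) :
    ((2*(d1:ℝ)^2*d2^2 - d1*d2^3 + d2^3 - d2^2) * k^3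
      + (4*(d1:ℝ)^3*d2 - 4*d1^2*d2^2 - 2*d1^2*d2 + 4*d1*d2^2 - 2*d1*d2) * k^2
      + (2*(d1:ℝ)^4 - 5*d1^3*d2 - 2*d1^3 + 5*d1^2*d2) * k
      - 2*(d1:ℝ)^4 + 2*d1^3) < 0 :=
  omega₂_neg (by exact_mod_cast h1) (by exact_mod_cast h2) hk1 hk2
end

section
/- For integers d2 ≥ d1 ≥ 2 and any real k ∈ [-d1/d2, 1], the quadratic ω₀(k) = (d1d2³ - 2d1d2² - d2³ - 2d1d2 + d2²)k² + (2d1²d2² - 2d1²d2 - 2d1d2² - 4d1² + 4d1d2)k + d1³d2 - d1²d2 + 4d1² is strictly positive. -/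
/-!
Write `a = d₁`, `b = d₂` and put `x = bk + a`, `y = 1 - k`: on the interval both are
nonnegative, and they do not vanish together. In these coordinates `(a + b)² b² ω₀(k)` is a
binary quadratic form in `x, y` whose mixed coefficient is nonnegative and whose coefficients
of `x²` and `y²` are positive as soon as `a ≥ 2`.
-/

def omegaZero (a b k : ℝ) : ℝ :=
  (a*b^3 - 2*a*b^2 - b^3 - 2*a*b + b^2) * k^2
    + (2*a^2*b^2 - 2*a^2*b - 2*a*b^2 - 4*a^2 + 4*a*b) * k
    + a^3*b - a^2*b + 4*a^2

lemma mul_omegaZero_eq (a b k : ℝ) :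
    (a + b)^2 * b^2 * omegaZero a b k =
      a^2*b^3*(b + 2*a) * (1 - k)^2
      + 2*a*b^2*(b^2 + 2*a*b + a*b^2 + 2*a^2 + a^2*b) * ((b*k + a) * (1 - k))
      + b^3*((a - 1)*b^2 + (2*a^2 - 4*a + 1)*b + a*(a - 1)*(a - 2)) * (b*k + a)^2 := by
  unfold omegaZero; ring

lemma quadForm_pos_of_nonneg {p q r x y : ℝ} (hp : 0 < p) (hq : 0 ≤ q) (hr : 0 < r)
    (hx : 0 ≤ x) (hy : 0 ≤ y) (hxy : 0 < x ∨ 0 < y) :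
    0 < p * y^2 + q * (x * y) + r * x^2 := by
  have hqxy : 0 ≤ q * (x * y) := by positivity
  rcases hxy with hx' | hy'
  · nlinarith [mul_pos hr (pow_pos hx' 2), sq_nonneg y]
  · nlinarith [mul_pos hp (pow_pos hy' 2), sq_nonneg x]

lemma omegaZero_pos {a b k : ℝ} (ha : 2 ≤ a) (hb : 0 < b) (hk₁ : -a ≤ b * k) (hk₂ : k ≤ 1) :
    0 < omegaZero a b k := by
  have hx : 0 ≤ b*k + a := by linarith
  have hy : 0 ≤ 1 - k := by linarith
  have hxy : 0 < b*k + a ∨ 0 < 1 - k := by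
    rcases hx.lt_or_eq with h | h
    · exact .inl h
    · right
      nlinarith
  have hR : 0 < (a - 1)*b^2 + (2*a^2 - 4*a + 1)*b + a*(a - 1)*(a - 2) := by
    have h₁ : 0 < (a - 1)*b^2 := mul_pos (by linarith) (by positivity)
    have h₂ : 0 ≤ (2*a^2 - 4*a + 1)*b := mul_nonneg (by nlinarith) hb.le
    have h₃ : 0 ≤ a*(a - 1)*(a - 2) := mul_nonneg (by nlinarith) (by linarith)
    linarith
  have ha₀ : 0 < a := by linarith
  have hmul : 0 < (a + b)^2 * b^2 * omegaZero a b k := by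
    rw [mul_omegaZero_eq]
    exact quadForm_pos_of_nonneg (by positivity) (by positivity) (by positivity) hx hy hxy
  exact pos_of_mul_pos_right hmul (by positivity)

/-- ω₀(k) > 0 for k ∈ [-d1/d2, 1]. -/
theorem stmt_5 (d1 d2 : ℕ) (h1 : 2 ≤ d1) (h2 : d1 ≤ d2) (k : ℝ)
    (hk1 : -(d1 : ℝ)/d2 ≤ k) (hk2 : k ≤ 1) :
    0 < ((d1:ℝ)*d2^3 - 2*d1*d2^2 - d2^3 - 2*d1*d2 + d2^2) * k^2
      + (2*(d1:ℝ)^2*d2^2 - 2*d1^2*d2 - 2*d1*d2^2 - 4*d1^2 + 4*d1*d2) * k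
      + (d1:ℝ)^3*d2 - d1^2*d2 + 4*d1^2 := by
  have hd2 : (0 : ℝ) < d2 := by exact_mod_cast (show 0 < d2 by omega)
  rw [div_le_iff₀ hd2, mul_comm] at hk1
  exact omegaZero_pos (by exact_mod_cast h1) hd2 hk1 hk2
end

section
/- For integers d2 ≥ d1 ≥ 2 and any real k ∈ [-d1/d2, 1], the sum P_X(k) + Q_X(k) is strictly negative, where P_X(k) = [d2(d1d2 - 2d1 - d2 + 1)k² + 2(d2-1)(d1-1)d1·k + d1²(d1-1)]·(1-k)/(d1(n-1)) and Q_X(k) = 4k(1 + d2·k/(2d1))(d1 + d2·k + d2·k/(2d1)) + (2 + 2k + 3d2·k/d1)·(d1 + d2·k² - (d1 + d2·k)²)/(n-1), with n = d1 + d2. -/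
/-!
With a = d₁ and u = 1 + (d₂/d₁)k, clearing denominators turns (n - 1)(P_X + Q_X)(k) into a cubic
in u with leading coefficient a(1 - a) < 0. For k ≥ 0 we have u ≥ 1 + k, and once a ≥ 2 every
Taylor coefficient of the cubic at u = 1 + k is negative. For k < 0 we have 0 ≤ u ≤ 1 + k; there
the quadratic coefficient is nonnegative, so dropping the cubic term and bounding u² by (1 + k)u
leaves a linear function of u, which is negative at both ends of [0, 1 + k].
-/

section CubicBounds

variable {R : Type*} [CommRing R] [LinearOrder R] [IsStrictOrderedRing R]

theorem horner_neg_of_nonneg {p₀ p₁ p₂ p₃ x : R} (h₀ : p₀ < 0) (h₁ : p₁ ≤ 0) (h₂ : p₂ ≤ 0)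
    (h₃ : p₃ ≤ 0) (hx : 0 ≤ x) : p₀ + x * (p₁ + x * (p₂ + x * p₃)) < 0 :=
  add_neg_of_neg_of_nonpos h₀ <| mul_nonpos_of_nonneg_of_nonpos hx <| add_nonpos h₁ <|
    mul_nonpos_of_nonneg_of_nonpos hx <| add_nonpos h₂ <| mul_nonpos_of_nonneg_of_nonpos hx h₃

theorem cubic_le_linear_of_mem_Icc {c₀ c₁ c₂ c₃ u L : R} (h₃ : c₃ ≤ 0) (h₂ : 0 ≤ c₂)
    (hu₀ : 0 ≤ u) (huL : u ≤ L) :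
    c₃ * u ^ 3 + c₂ * u ^ 2 + c₁ * u + c₀ ≤ c₀ + u * (c₂ * L + c₁) := by
  have hcube : c₃ * u ^ 3 ≤ 0 := mul_nonpos_of_nonpos_of_nonneg h₃ (pow_nonneg hu₀ 3)
  have hsq : c₂ * (u * u) ≤ c₂ * (u * L) :=
    mul_le_mul_of_nonneg_left (mul_le_mul_of_nonneg_left huL hu₀) h₂
  linear_combination hcube + hsq

theorem linear_neg_of_mem_Icc {c₀ m u L : R} (h₀ : c₀ < 0) (hL : c₀ + L * m < 0)
    (hu₀ : 0 ≤ u) (huL : u ≤ L) : c₀ + u * m < 0 := by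
  rcases le_or_gt m 0 with hm | hm
  · exact (add_le_of_nonpos_right (mul_nonpos_of_nonneg_of_nonpos hu₀ hm)).trans_lt h₀
  · exact (add_le_add_right (mul_le_mul_of_nonneg_right huL hm.le) c₀).trans_lt hL

end CubicBounds

def pxqxNumerator (a u k : ℝ) : ℝ :=
  a * (1 - a) * u ^ 3 + (2 * a ^ 2 - 2 * a - k + 3 * a * k - a ^ 2 * k) * u ^ 2
    + (2 * a - 2 * a ^ 2 + k - 8 * a * k + 2 * a ^ 2 * k - k ^ 2 + 4 * a * k ^ 2) * u
    + k * (2 - k + 2 * a - 2 * a * k)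

theorem px_add_qx_eq (a b k : ℝ) (ha : a ≠ 0) (hab : a + b - 1 ≠ 0) :
    (b * (a * b - 2 * a - b + 1) * k ^ 2 + 2 * (b - 1) * (a - 1) * a * k + a ^ 2 * (a - 1))
        * (1 - k) / (a * (a + b - 1))
      + (4 * k * (1 + b * k / (2 * a)) * (a + b * k + b * k / (2 * a))
        + (2 + 2 * k + 3 * b * k / a) * (a + b * k ^ 2 - (a + b * k) ^ 2) / (a + b - 1))
      = pxqxNumerator a (1 + b / a * k) k / (a + b - 1) := by
  unfold pxqxNumerator
  field_simp
  ring

theorem pxqxNumerator_neg_of_nonneg {a k x : ℝ} (ha : 2 ≤ a) (hk₀ : 0 ≤ k) (hk₁ : k ≤ 1)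
    (hx : 0 ≤ x) : pxqxNumerator a (1 + k + x) k < 0 := by
  have expand : pxqxNumerator a (1 + k + x) k =
      (-a * (a - 1) - 2 * (a - 1) * k - (a ^ 2 - a + 3) * k ^ 2 - 2 * (a ^ 2 - 4 * a + 1) * k ^ 3)
      + x * ((-a * (a - 1) - (2 * a ^ 2 + 1) * k - (5 * a ^ 2 - 13 * a + 3) * k ^ 2)
      + x * ((-a * (a - 1) - (4 * a ^ 2 - 6 * a + 1) * k) + x * (-a * (a - 1)))) := by
    unfold pxqxNumerator; ring
  have hs : 0 ≤ a - 2 := by linarith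
  have hkk : k ^ 2 ≤ k := by nlinarith
  have hk3 : k ^ 3 ≤ k ^ 2 := by nlinarith
  rw [expand]
  refine horner_neg_of_nonneg ?_ ?_ ?_ ?_ hx
  · nlinarith [mul_nonneg hs (sq_nonneg k), mul_nonneg (mul_nonneg hs hs) (pow_nonneg hk₀ 3),
      mul_nonneg hs hk₀]
  · nlinarith [mul_nonneg hs (sq_nonneg k), mul_nonneg (mul_nonneg hs hs) (sq_nonneg k)]
  · nlinarith [mul_nonneg hs hk₀, mul_nonneg (mul_nonneg hs hs) hk₀]
  · nlinarith

theorem pxqxNumerator_neg_of_neg {a k u : ℝ} (ha : 2 ≤ a) (hk : k < 0) (hu₀ : 0 ≤ u)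
    (hu₁ : u ≤ 1 + k) : pxqxNumerator a u k < 0 := by
  have hs : 0 ≤ a - 2 := by linarith
  have hm : 0 ≤ -k := by linarith
  have hp : 0 ≤ 1 + k := by linarith
  unfold pxqxNumerator
  refine (cubic_le_linear_of_mem_Icc ?_ ?_ hu₀ hu₁).trans_lt
    (linear_neg_of_mem_Icc ?_ ?_ hu₀ hu₁)
  · nlinarith
  · nlinarith [mul_nonneg hm hs, mul_nonneg hm (mul_nonneg hs hs)]
  · exact mul_neg_of_neg_of_pos hk (by nlinarith)
  · have hB : 0 < 2 * a + 2 - 2 * a * k - k + (1 + k) * (3 * a ^ 2 - 7 * a)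
        + k * (1 + k) * (7 * a - a ^ 2 - 2) := by
      nlinarith [mul_nonneg hs hm, mul_nonneg hs hp, mul_nonneg hm hp,
        mul_nonneg (mul_nonneg hs hs) hp, mul_nonneg (mul_nonneg hs hm) hp,
        mul_nonneg (mul_nonneg (mul_nonneg hs hs) hm) hp]
    linear_combination mul_neg_of_neg_of_pos hk hB

theorem pxqxNumerator_neg {a r k : ℝ} (ha : 2 ≤ a) (hr : 1 ≤ r) (hk₀ : 0 ≤ 1 + r * k)
    (hk₁ : k ≤ 1) : pxqxNumerator a (1 + r * k) k < 0 := by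
  rcases le_or_gt 0 k with hk | hk
  · convert pxqxNumerator_neg_of_nonneg ha hk hk₁ (mul_nonneg (sub_nonneg.2 hr) hk) using 2
    ring
  · exact pxqxNumerator_neg_of_neg ha hk hk₀ (by nlinarith)

/-- P_X(k) + Q_X(k) < 0 for k ∈ [-d1/d2, 1], with n = d1 + d2. -/
theorem stmt_7 (d1 d2 : ℕ) (h1 : 2 ≤ d1) (h2 : d1 ≤ d2) (k : ℝ)
    (hk1 : -(d1 : ℝ)/d2 ≤ k) (hk2 : k ≤ 1) :
    (((d2:ℝ)*(d1*d2 - 2*d1 - d2 + 1)*k^2 + 2*(d2 - 1)*(d1 - 1)*d1*k + d1^2*(d1 - 1))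
        * (1 - k) / (d1 * ((d1:ℝ) + d2 - 1))
      + (4*k*(1 + d2*k/(2*d1)) * ((d1:ℝ) + d2*k + d2*k/(2*d1))
        + (2 + 2*k + 3*(d2:ℝ)*k/d1) * ((d1:ℝ) + d2*k^2 - (d1 + d2*k)^2) / ((d1:ℝ) + d2 - 1)))
      < 0 := by
  have ha : (2 : ℝ) ≤ d1 := by exact_mod_cast h1
  have hab : (d1 : ℝ) ≤ d2 := by exact_mod_cast h2
  have hd1 : (0 : ℝ) < d1 := by linarith
  have hd2 : (0 : ℝ) < d2 := by linarith
  rw [px_add_qx_eq _ _ _ hd1.ne' (by linarith)]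
  refine div_neg_of_neg_of_pos (pxqxNumerator_neg ha ?_ ?_ hk2) (by linarith)
  · rwa [one_le_div hd1]
  · have hv : 0 ≤ (d1 : ℝ) + d2 * k := by
      have := (div_le_iff₀ hd2).1 hk1
      linarith
    calc (0 : ℝ) ≤ (d1 + d2 * k) / d1 := div_nonneg hv hd1.le
      _ = 1 + d2 / d1 * k := by field_simp
end

section
/- For integers d2 ≥ d1 ≥ 2, define ρ₀(k) = (d2-1)²·k·d2·(4d1 + 3d2·k)·(4(d1-1)(d1 + d2·k)² + d2²k²) and ρ₁(k) = 4d1²(d1-1)(2d2²k² + d2k² + 4d1d2k + 2d1k + 2d1²)². Then the rational function ρ₀/ρ₁ is strictly monotonically increasing on the interval (0,1). -/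
set_option linter.all false in
set_option maxHeartbeats 4000000 in
set_option maxRecDepth 100000 in
/-- ρ₀/ρ₁ is strictly monotonically increasing on (0,1). -/

theorem stmt_8 (d1 d2 : ℕ) (h1 : 2 ≤ d1) (h2 : d1 ≤ d2) :
    StrictMonoOn (fun k : ℝ =>
      (((d2:ℝ) - 1)^2 * k * d2 * (4*d1 + 3*d2*k)
          * (4*((d1:ℝ) - 1)*(d1 + d2*k)^2 + d2^2*k^2))
        / (4*(d1:ℝ)^2*(d1 - 1)*(2*d2^2*k^2 + d2*k^2 + 4*d1*d2*k + 2*d1*k + 2*d1^2)^2))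
      (Set.Ioo (0:ℝ) 1) := by
  have ha2 : (2:ℝ) ≤ (d1:ℝ) := by exact_mod_cast h1
  have hab : (d1:ℝ) ≤ (d2:ℝ) := by exact_mod_cast h2
  set a := (d1:ℝ) with ha'
  set b := (d2:ℝ) with hb'
  have ha0 : (0:ℝ) < a := by linarith
  have hb2 : (2:ℝ) ≤ b := by linarith
  have hb0 : (0:ℝ) < b := by linarith
  apply strictMonoOn_of_deriv_pos (convex_Ioo 0 1)
  · apply ContinuousOn.div
    · fun_prop
    · fun_prop
    · intro k hk
      have hr : (0:ℝ) < 2*b^2*k^2 + b*k^2 + 4*a*b*k + 2*a*k + 2*a^2 := by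
        nlinarith [hk.1, mul_pos ha0 hk.1, mul_pos hb0 hk.1, mul_pos (mul_pos ha0 hb0) hk.1, sq_nonneg k]
      have : (0:ℝ) < 4*a^2*(a-1)*(2*b^2*k^2 + b*k^2 + 4*a*b*k + 2*a*k + 2*a^2)^2 :=
        mul_pos (by nlinarith : (0:ℝ) < 4*a^2*(a-1)) (pow_pos hr 2)
      exact ne_of_gt this
  · intro k hk
    rw [interior_Ioo] at hk
    obtain ⟨hk0, hk1⟩ := hk
    have h0 : HasDerivAt (fun x:ℝ => x) 1 k := hasDerivAt_id k
    have hr : (0:ℝ) < 2*b^2*k^2 + b*k^2 + 4*a*b*k + 2*a*k + 2*a^2 := by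
      nlinarith [mul_pos ha0 hk0, mul_pos hb0 hk0, mul_pos (mul_pos ha0 hb0) hk0, sq_nonneg k]
    have hD : (0:ℝ) < 4*a^2*(a-1)*(2*b^2*k^2 + b*k^2 + 4*a*b*k + 2*a*k + 2*a^2)^2 :=
      mul_pos (by nlinarith : (0:ℝ) < 4*a^2*(a-1)) (pow_pos hr 2)
    have p1 : HasDerivAt (fun x:ℝ => (b-1)^2 * x * b) ((b-1)^2*b) k := by
      simpa using (h0.const_mul ((b-1)^2)).mul_const b
    have p2 : HasDerivAt (fun x:ℝ => 4*a + 3*b*x) (3*b) k := by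
      simpa using (h0.const_mul (3*b)).const_add (4*a)
    have p3 : HasDerivAt (fun x:ℝ => 4*(a-1)*(a+b*x)^2 + b^2*x^2)
        (4*(a-1)*(2*(a+b*k)*b) + b^2*(2*k)) k := by
      have i1 : HasDerivAt (fun x:ℝ => a + b*x) b k := by
        simpa using (h0.const_mul b).const_add a
      have i2 := (i1.pow 2).const_mul (4*(a-1))
      have i3 := (h0.pow 2).const_mul (b^2)
      have := i2.add i3
      refine this.congr_deriv ?_
      simp only [Nat.cast_ofNat, Nat.reduceSub, pow_one, mul_one, Pi.mul_apply]
    have hNd : HasDerivAt (fun x:ℝ => (b-1)^2 * x * b * (4*a + 3*b*x)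
        * (4*(a-1)*(a+b*x)^2 + b^2*x^2))
        ((b-1)^2*b*(4*a+3*b*k)*(4*(a-1)*(a+b*k)^2+b^2*k^2)
          + (b-1)^2*k*b*(3*b)*(4*(a-1)*(a+b*k)^2+b^2*k^2)
          + (b-1)^2*k*b*(4*a+3*b*k)*(4*(a-1)*(2*(a+b*k)*b) + b^2*(2*k))) k := by
      have := (p1.mul p2).mul p3
      refine this.congr_deriv ?_
      simp only [Nat.cast_ofNat, Nat.reduceSub, pow_one, mul_one, Pi.mul_apply]
      ring
    have q1 : HasDerivAt (fun x:ℝ => 2*b^2*x^2 + b*x^2 + 4*a*b*x + 2*a*x + 2*a^2)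
        (2*b^2*(2*k) + b*(2*k) + 4*a*b + 2*a) k := by
      have i1 := (h0.pow 2).const_mul (2*b^2)
      have i2 := (h0.pow 2).const_mul b
      have i3 := h0.const_mul (4*a*b)
      have i4 := h0.const_mul (2*a)
      have := (((i1.add i2).add i3).add i4).add_const (2*a^2)
      refine this.congr_deriv ?_
      simp only [Nat.cast_ofNat, Nat.reduceSub, pow_one, mul_one, Pi.mul_apply]
    have hDd : HasDerivAt (fun x:ℝ => 4*a^2*(a-1)*(2*b^2*x^2 + b*x^2 + 4*a*b*x + 2*a*x + 2*a^2)^2)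
        (4*a^2*(a-1)*(2*(2*b^2*k^2 + b*k^2 + 4*a*b*k + 2*a*k + 2*a^2)*(2*b^2*(2*k) + b*(2*k) + 4*a*b + 2*a))) k := by
      have := (q1.pow 2).const_mul (4*a^2*(a-1))
      refine this.congr_deriv ?_
      simp only [Nat.cast_ofNat, Nat.reduceSub, pow_one, mul_one, Pi.mul_apply]
    have hdiv := hNd.div hDd (ne_of_gt hD)
    erw [hdiv.deriv]
    apply div_pos _ (pow_pos hD 2)
    have hs : (0:ℝ) ≤ a - 2 := by linarith
    have ht : (0:ℝ) ≤ b - a := by linarith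
    have hk0' : (0:ℝ) ≤ k := le_of_lt hk0
    have hm : ∀ (c i j l : ℕ), (0:ℝ) ≤ (c:ℝ) * k ^ i * (a - 2) ^ j * (b - a) ^ l :=
      fun c i j l => mul_nonneg (mul_nonneg (mul_nonneg c.cast_nonneg (pow_nonneg hk0' i)) (pow_nonneg hs j)) (pow_nonneg ht l)
    have hS := (add_nonneg (add_nonneg (add_nonneg (add_nonneg (add_nonneg (add_nonneg (add_nonneg (add_nonneg (add_nonneg (hm 655360 0 0 1) (hm 524288 0 0 2)) (add_nonneg (hm 131072 0 0 3) (hm 2359296 0 1 0))) (add_nonneg (add_nonneg (hm 5308416 0 1 1) (hm 3801088 0 1 2)) (add_nonneg (hm 851968 0 1 3) (hm 9764864 0 2 0)))) (add_nonneg (add_nonneg (add_nonneg (hm 19660800 0 2 1) (hm 12517376 0 2 2)) (add_nonneg (hm 2490368 0 2 3) (hm 24641536 0 3 0))) (add_nonneg (add_nonneg (hm 44105728 0 3 1) (hm 24772608 0 3 2)) (add_nonneg (hm 4325376 0 3 3) (add_nonneg (hm 42369024 0 4 0) (hm 66895872 0 4 1)))))) (add_nonneg (add_nonneg (add_nonneg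 (add_nonneg (hm 32833536 0 4 2) (hm 4964352 0 4 3)) (add_nonneg (hm 52527104 0 5 0) (hm 72474624 0 5 1))) (add_nonneg (add_nonneg (hm 30720000 0 5 2) (hm 3956736 0 5 3)) (add_nonneg (hm 48439296 0 6 0) (add_nonneg (hm 57729024 0 6 1) (hm 20815872 0 6 2))))) (add_nonneg (add_nonneg (add_nonneg (hm 2236416 0 6 3) (hm 33767424 0 7 0)) (add_nonneg (hm 34246656 0 7 1) (hm 10297344 0 7 2))) (add_nonneg (add_nonneg (hm 897024 0 7 3) (hm 17888256 0 8 0)) (add_nonneg (hm 15137280 0 8 1) (add_nonneg (hm 3692544 0 8 2) (hm 250368 0 8 3))))))) (add_nonneg (add_nonneg (add_nonneg (add_nonneg (add_nonneg (hm 7169024 0 9 0) (hm 4925696 0 9 1)) (add_nonneg (hm 936448 0 9 2) (hm 46336 0 9 3))) (add_nonneg (add_nonneg (hm 2140416 0 10 0) (hm 1147392 0 10 1)) (add_nonneg (hm 159488 0 10 2) (add_nonneg (hm 5120 0 10 3) (hm 461824 0 11 0))))) (add_nonneg (add_nonneg (add_nonneg (hm 181248 0 11 1) (hm 16384 0 11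 2)) (add_nonneg (hm 256 0 11 3) (hm 68096 0 12 0))) (add_nonneg (add_nonneg (hm 17408 0 12 1) (hm 768 0 12 2)) (add_nonneg (hm 6144 0 13 0) (add_nonneg (hm 768 0 13 1) (hm 256 0 14 0)))))) (add_nonneg (add_nonneg (add_nonneg (add_nonneg (hm 1441792 1 0 0) (hm 4325376 1 0 1)) (add_nonneg (hm 4685824 1 0 2) (hm 2162688 1 0 3))) (add_nonneg (add_nonneg (hm 360448 1 0 4) (hm 12976128 1 1 0)) (add_nonneg (hm 35323904 1 1 1) (add_nonneg (hm 34603008 1 1 2) (hm 14417920 1 1 3))))) (add_nonneg (add_nonneg (add_nonneg (hm 2162688 1 1 4) (hm 53706752 1 2 0)) (add_nonneg (hm 131923968 1 2 1) (hm 116064256 1 2 2))) (add_nonneg (add_nonneg (hm 43253760 1 2 3) (hm 5767168 1 2 4)) (add_nonneg (hm 135528448 1 3 0) (add_nonneg (hm 298450944 1 3 1) (hm 233930752 1 3 2)))))))) (add_nonneg (add_nonneg (add_nonneg (add_nonneg (add_nonneg (add_nonneg (hm 77135872 1 3 3) (hm 9011200 1 3 4)) (add_nonneg (hm 233029632 1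 4 0) (hm 456507392 1 4 1))) (add_nonneg (add_nonneg (hm 315707392 1 4 2) (hm 90923008 1 4 3)) (add_nonneg (hm 9146368 1 4 4) (add_nonneg (hm 288899072 1 5 0) (hm 498769920 1 5 1))))) (add_nonneg (add_nonneg (add_nonneg (hm 300703744 1 5 2) (hm 74432512 1 5 3)) (add_nonneg (hm 6307840 1 5 4) (hm 266416128 1 6 0))) (add_nonneg (add_nonneg (hm 400637952 1 6 1) (hm 207370240 1 6 2)) (add_nonneg (hm 43208704 1 6 3) (add_nonneg (hm 2996224 1 6 4) (hm 185720832 1 7 0)))))) (add_nonneg (add_nonneg (add_nonneg (add_nonneg (hm 239652864 1 7 1) (hm 104372224 1 7 2)) (add_nonneg (hm 17797120 1 7 3) (hm 968704 1 7 4))) (add_nonneg (add_nonneg (hm 98385408 1 8 0) (hm 106799616 1 8 1)) (add_nonneg (hm 38068096 1 8 2) (add_nonneg (hm 5099776 1 8 3) (hm 204160 1 8 4))))) (add_nonneg (add_nonneg (add_nonneg (hm 39429632 1 9 0) (hm 35033856 1 9 1)) (add_nonneg (hm 9816576 1 9 2) (hm 968704 1 9 3))) (add_nonneg (add_nonneg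 (hm 25344 1 9 4) (hm 11772288 1 10 0)) (add_nonneg (hm 8225536 1 10 1) (add_nonneg (hm 1699456 1 10 2) (hm 109824 1 10 3))))))) (add_nonneg (add_nonneg (add_nonneg (add_nonneg (add_nonneg (hm 1408 1 10 4) (hm 2540032 1 11 0)) (add_nonneg (hm 1309440 1 11 1) (hm 177408 1 11 2))) (add_nonneg (add_nonneg (hm 5632 1 11 3) (hm 374528 1 12 0)) (add_nonneg (hm 126720 1 12 1) (add_nonneg (hm 8448 1 12 2) (hm 33792 1 13 0))))) (add_nonneg (add_nonneg (add_nonneg (hm 5632 1 13 1) (hm 1408 1 14 0)) (add_nonneg (hm 3473408 2 0 0) (hm 12189696 2 0 1))) (add_nonneg (add_nonneg (hm 16580608 2 0 2) (hm 10919936 2 0 3)) (add_nonneg (hm 3489792 2 0 4) (add_nonneg (hm 434176 2 0 5) (hm 31096832 2 1 0)))))) (add_nonneg (add_nonneg (add_nonneg (add_nonneg (hm 99516416 2 1 1) (hm 123019264 2 1 2)) (add_nonneg (hm 73404416 2 1 3) (hm 21168128 2 1 4))) (add_nonneg (add_nonneg (hm 2363392 2 1 5) (hm 128073728 2 2 0))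 (add_nonneg (hm 371695616 2 2 1) (add_nonneg (hm 414765056 2 2 2) (hm 222255104 2 2 3))))) (add_nonneg (add_nonneg (add_nonneg (hm 57171968 2 2 4) (hm 5642240 2 2 5)) (add_nonneg (hm 321699840 2 3 0) (hm 841240576 2 3 1))) (add_nonneg (add_nonneg (hm 840595456 2 3 2) (hm 400331776 2 3 3)) (add_nonneg (hm 90615808 2 3 4) (add_nonneg (hm 7762944 2 3 5) (hm 550723584 2 4 0))))))))) (add_nonneg (add_nonneg (add_nonneg (add_nonneg (add_nonneg (add_nonneg (add_nonneg (hm 1287624704 2 4 1) (hm 1141007360 2 4 2)) (add_nonneg (hm 476893696 2 4 3) (hm 93413376 2 4 4))) (add_nonneg (add_nonneg (hm 6791680 2 4 5) (hm 679931904 2 5 0)) (add_nonneg (hm 1408033792 2 5 1) (hm 1093241344 2 5 2)))) (add_nonneg (add_nonneg (add_nonneg (hm 394707712 2 5 3) (hm 65494016 2 5 4)) (add_nonneg (hm 3922688 2 5 5) (hm 624527360 2 6 0))) (add_nonneg (add_nonneg (hm 1132093952 2 6 1) (hm 758462208 2 6 2)) (add_nonneg (hm 231726208 2 6 3) (add_nonneg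 (hm 31650304 2 6 4) (hm 1497216 2 6 5)))))) (add_nonneg (add_nonneg (add_nonneg (add_nonneg (hm 433688576 2 7 0) (hm 677874432 2 7 1)) (add_nonneg (hm 384053888 2 7 2) (hm 96544192 2 7 3))) (add_nonneg (add_nonneg (hm 10416384 2 7 4) (hm 364480 2 7 5)) (add_nonneg (hm 228880640 2 8 0) (add_nonneg (hm 302389888 2 8 1) (hm 140920768 2 8 2))))) (add_nonneg (add_nonneg (add_nonneg (hm 27986368 2 8 3) (hm 2235584 2 8 4)) (add_nonneg (hm 51392 2 8 5) (hm 91385472 2 9 0))) (add_nonneg (add_nonneg (hm 99286592 2 9 1) (hm 36555200 2 9 2)) (add_nonneg (hm 5378048 2 9 3) (add_nonneg (hm 282688 2 9 4) (hm 3200 2 9 5))))))) (add_nonneg (add_nonneg (add_nonneg (add_nonneg (add_nonneg (hm 27182400 2 10 0) (hm 23330752 2 10 1)) (add_nonneg (hm 6365440 2 10 2) (hm 616832 2 10 3))) (add_nonneg (add_nonneg (hm 16000 2 10 4) (hm 5842752 2 11 0)) (add_nonneg (hm 3716672 2 11 1) (add_nonneg (hm 668288 2 11 2) (hm 32000 2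 11 3))))) (add_nonneg (add_nonneg (add_nonneg (hm 858176 2 12 0) (hm 359872 2 12 1)) (add_nonneg (hm 32000 2 12 2) (hm 77120 2 13 0))) (add_nonneg (add_nonneg (hm 16000 2 13 1) (hm 3200 2 14 0)) (add_nonneg (hm 4915200 3 0 0) (add_nonneg (hm 19595264 3 0 1) (hm 31686656 3 0 2)))))) (add_nonneg (add_nonneg (add_nonneg (add_nonneg (hm 26624000 3 0 3) (hm 12283904 3 0 4)) (add_nonneg (hm 2957312 3 0 5) (hm 290816 3 0 6))) (add_nonneg (add_nonneg (hm 43319296 3 1 0) (hm 158007296 3 1 1)) (add_nonneg (hm 232996864 3 1 2) (add_nonneg (hm 177881088 3 1 3) (hm 74227712 3 1 4))))) (add_nonneg (add_nonneg (add_nonneg (hm 16064512 3 1 5) (hm 1409024 3 1 6)) (add_nonneg (hm 175751168 3 2 0) (hm 583401472 3 2 1))) (add_nonneg (add_nonneg (hm 779337728 3 2 2) (hm 536047616 3 2 3)) (add_nonneg (hm 200098816 3 2 4) (add_nonneg (hm 38377472 3 2 5) (hm 2946048 3 2 6)))))))) (add_nonneg (add_nonneg (add_nonneg (add_nonneg (add_nonneg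 (add_nonneg (hm 435175424 3 3 0) (hm 1306345472 3 3 1)) (add_nonneg (hm 1568444416 3 3 2) (hm 962150400 3 3 3))) (add_nonneg (add_nonneg (hm 317088768 3 3 4) (hm 52969472 3 3 5)) (add_nonneg (hm 3476480 3 3 6) (add_nonneg (hm 734896128 3 4 0) (hm 1979809792 3 4 1))))) (add_nonneg (add_nonneg (add_nonneg (hm 2115928064 3 4 2) (hm 1143340032 3 4 3)) (add_nonneg (hm 327292160 3 4 4) (hm 46589440 3 4 5))) (add_nonneg (add_nonneg (hm 2535680 3 4 6) (hm 895639552 3 5 0)) (add_nonneg (hm 2145136640 3 5 1) (add_nonneg (hm 2016449536 3 5 2) (hm 944829440 3 5 3)))))) (add_nonneg (add_nonneg (add_nonneg (add_nonneg (hm 230044672 3 5 4) (hm 27101696 3 5 5)) (add_nonneg (hm 1171968 3 5 6) (hm 812603392 3 6 0))) (add_nonneg (add_nonneg (hm 1710065664 3 6 1) (hm 1392351232 3 6 2)) (add_nonneg (hm 554252544 3 6 3) (add_nonneg (hm 111562176 3 6 4) (hm 10434176 3 6 5))))) (add_nonneg (add_nonneg (add_nonneg (hm 335552 3 6 6) (hm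 557737984 3 7 0)) (add_nonneg (hm 1015819264 3 7 1) (hm 702089984 3 7 2))) (add_nonneg (add_nonneg (hm 230880768 3 7 3) (hm 36876608 3 7 4)) (add_nonneg (hm 2565376 3 7 5) (add_nonneg (hm 54464 3 7 6) (hm 291092224 3 8 0))))))) (add_nonneg (add_nonneg (add_nonneg (add_nonneg (add_nonneg (hm 449766656 3 8 1) (hm 256663168 3 8 2)) (add_nonneg (hm 66951680 3 8 3) (hm 7954624 3 8 4))) (add_nonneg (add_nonneg (hm 365696 3 8 5) (hm 3840 3 8 6)) (add_nonneg (hm 114997504 3 9 0) (add_nonneg (hm 146638336 3 9 1) (hm 66357632 3 9 2))))) (add_nonneg (add_nonneg (add_nonneg (hm 12875776 3 9 3) (hm 1011520 3 9 4)) (add_nonneg (hm 23040 3 9 5) (hm 33859776 3 10 0))) (add_nonneg (add_nonneg (hm 34227584 3 10 1) (hm 11520064 3 10 2)) (add_nonneg (hm 1478400 3 10 3) (add_nonneg (hm 57600 3 10 4) (hm 7207232 3 11 0)))))) (add_nonneg (add_nonneg (add_nonneg (add_nonneg (hm 5417728 3 11 1) (hm 1206080 3 11 2)) (add_nonneg (hm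 76800 3 11 3) (hm 1048640 3 12 0))) (add_nonneg (add_nonneg (hm 521344 3 12 1) (hm 57600 3 12 2)) (add_nonneg (hm 93376 3 13 0) (add_nonneg (hm 23040 3 13 1) (hm 3840 3 14 0))))) (add_nonneg (add_nonneg (add_nonneg (hm 4259840 4 0 0) (hm 18866176 4 0 1)) (add_nonneg (hm 34983936 4 0 2) (hm 35260416 4 0 3))) (add_nonneg (add_nonneg (hm 20904960 4 0 4) (hm 7305216 4 0 5)) (add_nonneg (hm 1395712 4 0 6) (add_nonneg (hm 112640 4 0 7) (hm 36724736 4 1 0)))))))))) (add_nonneg (add_nonneg (add_nonneg (add_nonneg (add_nonneg (add_nonneg (add_nonneg (add_nonneg (hm 149139456 4 1 1) (hm 252751872 4 1 2)) (add_nonneg (hm 231926784 4 1 3) (hm 124561920 4 1 4))) (add_nonneg (add_nonneg (hm 39177216 4 1 5) (hm 6681088 4 1 6)) (add_nonneg (hm 476160 4 1 7) (hm 145776640 4 2 0)))) (add_nonneg (add_nonneg (add_nonneg (hm 540043264 4 2 1) (hm 831114240 4 2 2)) (add_nonneg (hm 688631808 4 2 3) (hm 331514880 4 2 4))) (add_nonneg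 (add_nonneg (hm 92568576 4 2 5) (hm 13838336 4 2 6)) (add_nonneg (hm 849920 4 2 7) (add_nonneg (hm 353271808 4 3 0) (hm 1186515968 4 3 1)))))) (add_nonneg (add_nonneg (add_nonneg (add_nonneg (hm 1645400064 4 3 2) (hm 1218905600 4 3 3)) (add_nonneg (hm 519304960 4 3 4) (hm 126598656 4 3 5))) (add_nonneg (add_nonneg (hm 16221440 4 3 6) (hm 832000 4 3 7)) (add_nonneg (hm 584138752 4 4 0) (add_nonneg (hm 1765379584 4 4 1) (hm 2185102080 4 4 2))))) (add_nonneg (add_nonneg (add_nonneg (hm 1429665920 4 4 3) (hm 530504640 4 4 4)) (add_nonneg (hm 110524800 4 4 5) (hm 11783360 4 4 6))) (add_nonneg (add_nonneg (hm 483200 4 4 7) (hm 697426944 4 5 0)) (add_nonneg (hm 1879051520 4 5 1) (add_nonneg (hm 2051351808 4 5 2) (hm 1167153088 4 5 3))))))) (add_nonneg (add_nonneg (add_nonneg (add_nonneg (add_nonneg (hm 369467680 4 5 4) (hm 63918528 4 5 5)) (add_nonneg (hm 5436576 4 5 6) (hm 166720 4 5 7))) (add_nonneg (add_nonneg (hm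 620268544 4 6 0) (hm 1472487296 4 6 1)) (add_nonneg (hm 1396366656 4 6 2) (add_nonneg (hm 676964032 4 6 3) (hm 177726560 4 6 4))))) (add_nonneg (add_nonneg (add_nonneg (hm 24499968 4 6 5) (hm 1557024 4 6 6)) (add_nonneg (hm 31680 4 6 7) (hm 417588736 4 7 0))) (add_nonneg (add_nonneg (hm 860406848 4 7 1) (hm 694627200 4 7 2)) (add_nonneg (hm 279046144 4 7 3) (add_nonneg (hm 58327840 4 7 4) (hm 6004608 4 7 5)))))) (add_nonneg (add_nonneg (add_nonneg (add_nonneg (hm 253248 4 7 6) (hm 2560 4 7 7)) (add_nonneg (hm 213925120 4 8 0) (hm 374988224 4 8 1))) (add_nonneg (add_nonneg (hm 250685952 4 8 2) (hm 80131200 4 8 3)) (add_nonneg (hm 12502880 4 8 4) (add_nonneg (hm 854208 4 8 5) (hm 17920 4 8 6))))) (add_nonneg (add_nonneg (add_nonneg (hm 83010656 4 9 0) (hm 120423232 4 9 1)) (add_nonneg (hm 64024800 4 9 2) (hm 15270720 4 9 3))) (add_nonneg (add_nonneg (hm 1581120 4 9 4) (hm 53760 4 9 5)) (add_nonneg (hm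 24024032 4 10 0) (add_nonneg (hm 27704576 4 10 1) (hm 10986720 4 10 2)))))))) (add_nonneg (add_nonneg (add_nonneg (add_nonneg (add_nonneg (add_nonneg (hm 1738560 4 10 3) (hm 89600 4 10 4)) (add_nonneg (hm 5029728 4 11 0) (hm 4324864 4 11 1))) (add_nonneg (add_nonneg (hm 1137600 4 11 2) (hm 89600 4 11 3)) (add_nonneg (hm 720288 4 12 0) (add_nonneg (hm 410688 4 12 1) (hm 53760 4 12 2))))) (add_nonneg (add_nonneg (add_nonneg (hm 63168 4 13 0) (hm 17920 4 13 1)) (add_nonneg (hm 2560 4 14 0) (hm 2048000 5 0 0))) (add_nonneg (add_nonneg (hm 9953280 5 0 1) (hm 20733952 5 0 2)) (add_nonneg (hm 24219648 5 0 3) (add_nonneg (hm 17384448 5 0 4) (hm 7865856 5 0 5)))))) (add_nonneg (add_nonneg (add_nonneg (add_nonneg (hm 2194432 5 0 6) (hm 345600 5 0 7)) (add_nonneg (hm 23552 5 0 8) (hm 17285120 5 1 0))) (add_nonneg (add_nonneg (hm 77127680 5 1 1) (hm 147005440 5 1 2)) (add_nonneg (hm 156463104 5 1 3) (add_nonneg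 (hm 101784576 5 1 4) (hm 41455104 5 1 5))))) (add_nonneg (add_nonneg (add_nonneg (hm 10319872 5 1 6) (hm 1434112 5 1 7)) (add_nonneg (hm 84992 5 1 8) (hm 67125248 5 2 0))) (add_nonneg (add_nonneg (hm 273588224 5 2 1) (hm 474085376 5 2 2)) (add_nonneg (hm 456047616 5 2 3) (add_nonneg (hm 266110464 5 2 4) (hm 96264960 5 2 5))))))) (add_nonneg (add_nonneg (add_nonneg (add_nonneg (add_nonneg (hm 21011968 5 2 6) (hm 2516224 5 2 7)) (add_nonneg (hm 125440 5 2 8) (hm 159055872 5 3 0))) (add_nonneg (add_nonneg (hm 588525568 5 3 1) (hm 920068096 5 3 2)) (add_nonneg (hm 792151040 5 3 3) (add_nonneg (hm 409448448 5 3 4) (hm 129424384 5 3 5))))) (add_nonneg (add_nonneg (add_nonneg (hm 24233472 5 3 6) (hm 2425856 5 3 7)) (add_nonneg (hm 97280 5 3 8) (hm 257046528 5 4 0))) (add_nonneg (add_nonneg (hm 857000960 5 4 1) (hm 1197377024 5 4 2)) (add_nonneg (hm 911601920 5 4 3) (add_nonneg (hm 410870336 5 4 4) (hm 111126112 5 4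 5)))))) (add_nonneg (add_nonneg (add_nonneg (add_nonneg (hm 17337792 5 4 6) (hm 1390432 5 4 7)) (add_nonneg (hm 41920 5 4 8) (hm 299857920 5 5 0))) (add_nonneg (add_nonneg (hm 892518400 5 5 1) (hm 1101351424 5 5 2)) (add_nonneg (hm 730140416 5 5 3) (add_nonneg (hm 281128256 5 5 4) (hm 63238688 5 5 5))))) (add_nonneg (add_nonneg (add_nonneg (hm 7887360 5 5 6) (hm 474464 5 5 7)) (add_nonneg (hm 9536 5 5 8) (hm 260516864 5 6 0))) (add_nonneg (add_nonneg (hm 684228608 5 6 1) (hm 734479488 5 6 2)) (add_nonneg (hm 415504704 5 6 3) (add_nonneg (hm 132894592 5 6 4) (hm 23865952 5 6 5))))))))) (add_nonneg (add_nonneg (add_nonneg (add_nonneg (add_nonneg (add_nonneg (add_nonneg (hm 2229824 5 6 6) (hm 89344 5 6 7)) (add_nonneg (hm 896 5 6 8) (hm 171321344 5 7 0))) (add_nonneg (add_nonneg (hm 391118592 5 7 1) (hm 357964544 5 7 2)) (add_nonneg (hm 168067008 5 7 3) (add_nonneg (hm 42874880 5 7 4) (hm 5762720 5 7 5))))) (add_nonneg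 (add_nonneg (add_nonneg (hm 358400 5 7 6) (hm 7168 5 7 7)) (add_nonneg (hm 85732160 5 8 0) (hm 166764640 5 8 1))) (add_nonneg (add_nonneg (hm 126584128 5 8 2) (hm 47369760 5 8 3)) (add_nonneg (hm 9038080 5 8 4) (add_nonneg (hm 808192 5 8 5) (hm 25088 5 8 6)))))) (add_nonneg (add_nonneg (add_nonneg (add_nonneg (hm 32500416 5 9 0) (hm 52401440 5 9 1)) (add_nonneg (hm 31684352 5 9 2) (hm 8862880 5 9 3))) (add_nonneg (add_nonneg (hm 1124480 5 9 4) (hm 50176 5 9 5)) (add_nonneg (hm 9191040 5 10 0) (add_nonneg (hm 11798560 5 10 1) (hm 5329984 5 10 2))))) (add_nonneg (add_nonneg (add_nonneg (hm 990976 5 10 3) (hm 62720 5 10 4)) (add_nonneg (hm 1880832 5 11 0) (hm 1803104 5 11 1))) (add_nonneg (add_nonneg (hm 541184 5 11 2) (hm 50176 5 11 3)) (add_nonneg (hm 263360 5 12 0) (add_nonneg (hm 167680 5 12 1) (hm 25088 5 12 2))))))) (add_nonneg (add_nonneg (add_nonneg (add_nonneg (add_nonneg (hm 22592 5 13 0)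 (hm 7168 5 13 1)) (add_nonneg (hm 896 5 14 0) (hm 409600 6 0 0))) (add_nonneg (add_nonneg (hm 2170880 6 0 1) (hm 5021696 6 0 2)) (add_nonneg (hm 6664192 6 0 3) (add_nonneg (hm 5600256 6 0 4) (hm 3095040 6 0 5))))) (add_nonneg (add_nonneg (add_nonneg (hm 1126400 6 0 6) (hm 260608 6 0 7)) (add_nonneg (hm 34816 6 0 8) (hm 2048 6 0 9))) (add_nonneg (add_nonneg (hm 3399680 6 1 0) (hm 16556032 6 1 1)) (add_nonneg (hm 35057664 6 1 2) (add_nonneg (hm 42393600 6 1 3) (hm 32275968 6 1 4)))))) (add_nonneg (add_nonneg (add_nonneg (add_nonneg (hm 16043520 6 1 5) (hm 5203456 6 1 6)) (add_nonneg (hm 1060352 6 1 7) (hm 122880 6 1 8))) (add_nonneg (add_nonneg (hm 6144 6 1 9) (hm 12967936 6 2 0)) (add_nonneg (hm 57720832 6 2 1) (add_nonneg (hm 111155200 6 2 2) (hm 121478144 6 2 3))))) (add_nonneg (add_nonneg (add_nonneg (hm 82922496 6 2 4) (hm 36580608 6 2 5)) (add_nonneg (hm 10390016 6 2 6) (hm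 1821440 6 2 7))) (add_nonneg (add_nonneg (hm 177152 6 2 8) (hm 7168 6 2 9)) (add_nonneg (hm 30146560 6 3 0) (add_nonneg (hm 121872384 6 3 1) (hm 211772416 6 3 2)))))))) (add_nonneg (add_nonneg (add_nonneg (add_nonneg (add_nonneg (add_nonneg (hm 207111168 6 3 3) (hm 125172992 6 3 4)) (add_nonneg (hm 48212480 6 3 5) (hm 11734272 6 3 6))) (add_nonneg (add_nonneg (hm 1717248 6 3 7) (hm 134144 6 3 8)) (add_nonneg (hm 4096 6 3 9) (add_nonneg (hm 47740928 6 4 0) (hm 173960192 6 4 1))))) (add_nonneg (add_nonneg (add_nonneg (hm 270162432 6 4 2) (hm 233582336 6 4 3)) (add_nonneg (hm 123037504 6 4 4) (hm 40519584 6 4 5))) (add_nonneg (add_nonneg (hm 8210176 6 4 6) (hm 961696 6 4 7)) (add_nonneg (hm 56448 6 4 8) (add_nonneg (hm 1152 6 4 9) (hm 54510592 6 5 0)))))) (add_nonneg (add_nonneg (add_nonneg (add_nonneg (hm 177357824 6 5 1) (hm 243249920 6 5 2)) (add_nonneg (hm 183079424 6 5 3) (hm 82340704 6 5 4))) (add_nonneg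 (add_nonneg (hm 22538656 6 5 5) (hm 3648352 6 5 6)) (add_nonneg (hm 320416 6 5 7) (add_nonneg (hm 12544 6 5 8) (hm 128 6 5 9))))) (add_nonneg (add_nonneg (add_nonneg (hm 46301184 6 6 0) (hm 132938240 6 6 1)) (add_nonneg (hm 158580352 6 6 2) (hm 101811264 6 6 3))) (add_nonneg (add_nonneg (hm 38017824 6 6 4) (hm 8303392 6 6 5)) (add_nonneg (hm 1006432 6 6 6) (add_nonneg (hm 58880 6 6 7) (hm 1152 6 6 8))))))) (add_nonneg (add_nonneg (add_nonneg (add_nonneg (add_nonneg (hm 29735424 6 7 0) (hm 74206208 6 7 1)) (add_nonneg (hm 75454656 6 7 2) (hm 40188992 6 7 3))) (add_nonneg (add_nonneg (hm 11964128 6 7 4) (hm 1954848 6 7 5)) (add_nonneg (hm 157696 6 7 6) (add_nonneg (hm 4608 6 7 7) (hm 14515776 6 8 0))))) (add_nonneg (add_nonneg (add_nonneg (hm 30860576 6 8 1) (hm 26017088 6 8 2)) (add_nonneg (hm 11040224 6 8 3) (hm 2457056 6 8 4))) (add_nonneg (add_nonneg (hm 267008 6 8 5) (hm 10752 6 8 6))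 (add_nonneg (hm 5362400 6 9 0) (add_nonneg (hm 9447456 6 9 1) (hm 6342176 6 9 2)))))) (add_nonneg (add_nonneg (add_nonneg (add_nonneg (hm 2010848 6 9 3) (hm 297472 6 9 4)) (add_nonneg (hm 16128 6 9 5) (hm 1476256 6 10 0))) (add_nonneg (add_nonneg (hm 2070112 6 10 1) (hm 1037856 6 10 2)) (add_nonneg (hm 218624 6 10 3) (add_nonneg (hm 16128 6 10 4) (hm 293792 6 11 0))))) (add_nonneg (add_nonneg (add_nonneg (hm 307552 6 11 1) (hm 102400 6 11 2)) (add_nonneg (hm 10752 6 11 3) (hm 39968 6 12 0))) (add_nonneg (add_nonneg (hm 27776 6 12 1) (hm 4608 6 12 2)) (add_nonneg (hm 3328 6 13 0) (add_nonneg (hm 1152 6 13 1) (hm 128 6 14 0)))))))))))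
    push_cast at hS
    linarith [hS]
end

section
/- For integers d2 ≥ d1 ≥ 2, the cubic ρ₃(k) = (2d2³ + d2²)k³ + (8d1d2² - 2d1d2 - 5d2² + 2d2)k² + (10d1²d2 - 4d1² - 10d1d2 + 4d1)k + 4d1³ - 4d1² is strictly positive for every k ∈ (0,1). -/
/-!
For `d₂ ≥ d₁ ≥ 2` every coefficient of `ρ₃` is nonnegative and its constant term is positive, as the
factorisation
`ρ₃ = d₂²(2d₂ + 1) k³ + d₂((8d₁ - 5)(d₂ - 1) + 6d₁ - 3) k² + 2d₁(d₁ - 1)(5d₂ - 2) k + 4d₁²(d₁ - 1)`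
shows.
-/

lemma cubic_pos_of_coeff_nonneg {a b c d k : ℝ} (ha : 0 ≤ a) (hb : 0 ≤ b) (hc : 0 ≤ c)
    (hd : 0 < d) (hk : 0 ≤ k) : 0 < a * k ^ 3 + b * k ^ 2 + c * k + d := by
  have := mul_nonneg ha (pow_nonneg hk 3)
  have := mul_nonneg hb (pow_nonneg hk 2)
  have := mul_nonneg hc hk
  linarith

section Coefficients

variable {d1 d2 : ℝ}

lemma rho3_coeff_three_nonneg (h2 : 0 ≤ d2) : 0 ≤ 2 * d2 ^ 3 + d2 ^ 2 := by
  positivity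

lemma rho3_coeff_two_nonneg (h1 : 1 ≤ d1) (h2 : 1 ≤ d2) :
    0 ≤ 8 * d1 * d2 ^ 2 - 2 * d1 * d2 - 5 * d2 ^ 2 + 2 * d2 := by
  have hfac : 8 * d1 * d2 ^ 2 - 2 * d1 * d2 - 5 * d2 ^ 2 + 2 * d2
      = d2 * ((8 * d1 - 5) * (d2 - 1) + (6 * d1 - 3)) := by ring
  rw [hfac]
  have : 0 ≤ (8 * d1 - 5) * (d2 - 1) := mul_nonneg (by linarith) (by linarith)
  exact mul_nonneg (by linarith) (by linarith)

lemma rho3_coeff_one_nonneg (h1 : 1 ≤ d1) (h2 : 1 ≤ d2) :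
    0 ≤ 10 * d1 ^ 2 * d2 - 4 * d1 ^ 2 - 10 * d1 * d2 + 4 * d1 := by
  have hfac : 10 * d1 ^ 2 * d2 - 4 * d1 ^ 2 - 10 * d1 * d2 + 4 * d1
      = 2 * d1 * (d1 - 1) * (5 * d2 - 2) := by ring
  rw [hfac]
  exact mul_nonneg (mul_nonneg (by linarith) (by linarith)) (by linarith)

lemma rho3_coeff_zero_pos (h1 : 1 < d1) : 0 < 4 * d1 ^ 3 - 4 * d1 ^ 2 := by
  have hfac : 4 * d1 ^ 3 - 4 * d1 ^ 2 = 4 * d1 ^ 2 * (d1 - 1) := by ring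
  rw [hfac]
  exact mul_pos (by positivity) (by linarith)

end Coefficients

theorem stmt_9_general (d1 d2 : ℕ) (h1 : 2 ≤ d1) (h2 : d1 ≤ d2) (k : ℝ)
    (hk1 : 0 < k) :
    0 < (2*(d2:ℝ)^3 + d2^2)*k^3
      + (8*(d1:ℝ)*d2^2 - 2*d1*d2 - 5*d2^2 + 2*d2)*k^2
      + (10*(d1:ℝ)^2*d2 - 4*d1^2 - 10*d1*d2 + 4*d1)*k
      + 4*(d1:ℝ)^3 - 4*d1^2 := by
  have hd1 : (2 : ℝ) ≤ d1 := by exact_mod_cast h1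
  have hd2 : (2 : ℝ) ≤ d2 := by exact_mod_cast h1.trans h2
  rw [add_sub_assoc]
  exact cubic_pos_of_coeff_nonneg (rho3_coeff_three_nonneg (by linarith))
    (rho3_coeff_two_nonneg (by linarith) (by linarith))
    (rho3_coeff_one_nonneg (by linarith) (by linarith)) (rho3_coeff_zero_pos (by linarith)) hk1.le

/-- ρ₃(k) > 0 for k ∈ (0,1). -/
theorem stmt_9 (d1 d2 : ℕ) (h1 : 2 ≤ d1) (h2 : d1 ≤ d2) (k : ℝ)
    (hk1 : 0 < k) (hk2 : k < 1) :
    0 < (2*(d2:ℝ)^3 + d2^2)*k^3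
      + (8*(d1:ℝ)*d2^2 - 2*d1*d2 - 5*d2^2 + 2*d2)*k^2
      + (10*(d1:ℝ)^2*d2 - 4*d1^2 - 10*d1*d2 + 4*d1)*k
      + 4*(d1:ℝ)^3 - 4*d1^2 :=
  stmt_9_general d1 d2 h1 h2 k hk1
end

section
/- For integers d2 ≥ d1 ≥ 2 with n = d1 + d2, one has P_X(-d1(n+d1-2)/(d2(n+d1-1))) = -d1(n-1)(2d1+d2)/(d2(2d1+d2-1)³) < 0, where P_X(k) = [d2(d1d2 - 2d1 - d2 + 1)k² + 2(d2-1)(d1-1)d1·k + d1²(d1-1)]·(1-k)/(d1(n-1)). -/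
noncomputable def pX (d1 d2 k : ℝ) : ℝ :=
  (d2 * (d1 * d2 - 2 * d1 - d2 + 1) * k ^ 2 + 2 * (d2 - 1) * (d1 - 1) * d1 * k + d1 ^ 2 * (d1 - 1))
    * (1 - k) / (d1 * ((d1 + d2) - 1))

-- The denominator n + d1 - 1 of the evaluation point is 2 d1 + d2 - 1 (n = d1 + d2).
theorem pX_eval {d1 d2 : ℝ} (h1 : d1 ≠ 0) (h2 : d2 ≠ 0) (hn : d1 + d2 - 1 ≠ 0)
    (hm : 2 * d1 + d2 - 1 ≠ 0) :
    pX d1 d2 (-d1 * ((d1 + d2) + d1 - 2) / (d2 * ((d1 + d2) + d1 - 1)))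
      = -d1 * ((d1 + d2) - 1) * (2 * d1 + d2) / (d2 * (2 * d1 + d2 - 1) ^ 3) := by
  have hm' : (d1 + d2) + d1 - 1 ≠ 0 := by rwa [add_right_comm, ← two_mul]
  unfold pX
  rw [div_eq_div_iff (mul_ne_zero h1 hn) (mul_ne_zero h2 (pow_ne_zero 3 hm))]
  field_simp
  ring

theorem pX_eval_rhs_neg {d1 d2 : ℝ} (h1 : 0 < d1) (h2 : 0 < d2) (hn : 1 < d1 + d2) :
    -d1 * ((d1 + d2) - 1) * (2 * d1 + d2) / (d2 * (2 * d1 + d2 - 1) ^ 3) < 0 := by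
  have hnum : 0 < d1 * ((d1 + d2) - 1) * (2 * d1 + d2) :=
    mul_pos (mul_pos h1 (by linarith)) (by linarith)
  have hden : 0 < d2 * (2 * d1 + d2 - 1) ^ 3 := mul_pos h2 (pow_pos (by linarith) 3)
  rw [neg_mul, neg_mul, neg_div]
  exact neg_neg_of_pos (div_pos hnum hden)

/-- P_X(-d1(n+d1-2)/(d2(n+d1-1))) = -d1(n-1)(2d1+d2)/(d2(2d1+d2-1)³) < 0, n = d1+d2. -/
theorem stmt_17 (d1 d2 : ℕ) (h1 : 2 ≤ d1) (h2 : d1 ≤ d2) :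
    (((d2:ℝ)*(d1*d2 - 2*d1 - d2 + 1)
          * (-(d1:ℝ)*(((d1:ℝ) + d2) + d1 - 2) / ((d2:ℝ)*(((d1:ℝ) + d2) + d1 - 1)))^2
        + 2*((d2:ℝ) - 1)*((d1:ℝ) - 1)*d1
          * (-(d1:ℝ)*(((d1:ℝ) + d2) + d1 - 2) / ((d2:ℝ)*(((d1:ℝ) + d2) + d1 - 1)))
        + (d1:ℝ)^2*(d1 - 1))
        * (1 - (-(d1:ℝ)*(((d1:ℝ) + d2) + d1 - 2) / ((d2:ℝ)*(((d1:ℝ) + d2) + d1 - 1))))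
        / ((d1:ℝ)*(((d1:ℝ) + d2) - 1))
      = -(d1:ℝ)*(((d1:ℝ) + d2) - 1)*(2*(d1:ℝ) + d2)
          / ((d2:ℝ)*(2*(d1:ℝ) + d2 - 1)^3)) ∧
    (-(d1:ℝ)*(((d1:ℝ) + d2) - 1)*(2*(d1:ℝ) + d2)
        / ((d2:ℝ)*(2*(d1:ℝ) + d2 - 1)^3) < 0) := by
  have hd1 : (2:ℝ) ≤ d1 := by exact_mod_cast h1
  have hd2 : (d1:ℝ) ≤ d2 := by exact_mod_cast h2
  exact ⟨pX_eval (ne_of_gt (by linarith)) (ne_of_gt (by linarith)) (ne_of_gt (by linarith)) (ne_of_gt (by linarith)),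
    pX_eval_rhs_neg (by linarith) (by linarith) (by linarith)⟩
end

section
/- For integers d2 ≥ d1 ≥ 2 and any A ≥ Ψ(d1,d2), where Ψ(d1,d2) = ((4(d1-1)n² + d2²)(3n + d1))/((2n² + n + d1)²·d1²)·(d2(d2-1)²)/(4(d1-1)) with n = d1 + d2, the inequality ρ₁(k)·A - ρ₀(k) > 0 holds for every k ∈ (0,1), where ρ₀(k) = (d2-1)²·k·d2·(4d1 + 3d2k)(4(d1-1)(d1 + d2k)² + d2²k²) and ρ₁(k) = 4d1²(d1-1)(2d2²k² + d2k² + 4d1d2k + 2d1k + 2d1²)². -/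
noncomputable def B19_0 (a b : ℝ) : ℝ := (60928 * a^0 * b^0) + (45312 * a^0 * b^1) + (11392 * a^0 * b^2) + (960 * a^0 * b^3) + (270592 * a^1 * b^0) + (176896 * a^1 * b^1) + (38208 * a^1 * b^2) + (2688 * a^1 * b^3) + (520576 * a^2 * b^0) + (292800 * a^2 * b^1) + (52800 * a^2 * b^2) + (2976 * a^2 * b^3) + (567616 * a^3 * b^0) + (266880 * a^3 * b^1) + (38560 * a^3 * b^2) + (1632 * a^3 * b^3) + (384160 * a^4 * b^0) + (144880 * a^4 * b^1) + (15720 * a^4 * b^2) + (444 * a^4 * b^3) + (165424 * a^5 * b^0) + (46896 * a^5 * b^1) + (3396 * a^5 * b^2) + (48 * a^5 * b^3) + (44296 * a^6 * b^0) + (8388 * a^6 * b^1) + (304 * a^6 * b^2) + (6748 * a^7 * b^0) + (640 * a^7 * b^1) + (448 * a^8 * b^0)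

noncomputable def B19_1 (a b : ℝ) : ℝ := (180736 * a^0 * b^0) + (228352 * a^0 * b^1) + (102528 * a^0 * b^2) + (19840 * a^0 * b^3) + (1408 * a^0 * b^4) + (790528 * a^1 * b^0) + (875392 * a^1 * b^1) + (338176 * a^1 * b^2) + (54816 * a^1 * b^3) + (3136 * a^1 * b^4) + (1501696 * a^2 * b^0) + (1426752 * a^2 * b^1) + (460768 * a^2 * b^2) + (60016 * a^2 * b^3) + (2592 * a^2 * b^4) + (1619392 * a^3 * b^0) + (1283008 * a^3 * b^1) + (332400 * a^3 * b^2) + (32600 * a^3 * b^3) + (944 * a^3 * b^4) + (1084960 * a^4 * b^0) + (688096 * a^4 * b^1) + (134048 * a^4 * b^2) + (8796 * a^4 * b^3) + (128 * a^4 * b^4) + (462688 * a^5 * b^0) + (220248 * a^5 * b^1) + (28676 * a^5 * b^2) + (944 * a^5 * b^3) + (122704 * a^6 * b^0) + (38980 * a^6 * b^1) + (2544 * a^6 * b^2) + (18508 * a^7 * b^0) + (2944 * a^7 * b^1) + (1216 * a^8 * b^0)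

noncomputable def B19_2 (a b : ℝ) : ℝ := (205568 * a^0 * b^0) + (357632 * a^0 * b^1) + (239488 * a^0 * b^2) + (77248 * a^0 * b^3) + (12080 * a^0 * b^4) + (736 * a^0 * b^5) + (859776 * a^1 * b^0) + (1311808 * a^1 * b^1) + (755488 * a^1 * b^2) + (204016 * a^1 * b^3) + (25680 * a^1 * b^4) + (1184 * a^1 * b^5) + (1570688 * a^2 * b^0) + (2057920 * a^2 * b^1) + (990480 * a^2 * b^2) + (214864 * a^2 * b^3) + (20396 * a^2 * b^4) + (632 * a^2 * b^5) + (1636736 * a^3 * b^0) + (1789792 * a^3 * b^1) + (690888 * a^3 * b^2) + (112828 * a^3 * b^3) + (7176 * a^3 * b^4) + (112 * a^3 * b^5) + (1063920 * a^4 * b^0) + (931984 * a^4 * b^1) + (270452 * a^4 * b^2) + (29548 * a^4 * b^3) + (944 * a^4 * b^4) + (441704 * a^5 * b^0) + (290564 * a^5 * b^1) + (56340 * a^5 * b^2) + (3088 * a^5 * b^3) + (114368 * a^6 * b^0) + (50220 * a^6 * b^1) + (4880 * a^6 * b^2) + (16884 * a^7 * b^0) + (3712 * a^7 * b^1) + (1088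 * a^8 * b^0)

noncomputable def B19_3 (a b : ℝ) : ℝ := (78080 * a^0 * b^0) + (172800 * a^0 * b^1) + (155008 * a^0 * b^2) + (72000 * a^0 * b^3) + (18256 * a^0 * b^4) + (2400 * a^0 * b^5) + (128 * a^0 * b^6) + (313984 * a^1 * b^0) + (608064 * a^1 * b^1) + (467616 * a^1 * b^2) + (181040 * a^1 * b^3) + (36720 * a^1 * b^4) + (3616 * a^1 * b^5) + (128 * a^1 * b^6) + (552704 * a^2 * b^0) + (917440 * a^2 * b^1) + (587984 * a^2 * b^2) + (182128 * a^2 * b^3) + (27700 * a^2 * b^4) + (1816 * a^2 * b^5) + (32 * a^2 * b^6) + (556160 * a^3 * b^0) + (769248 * a^3 * b^1) + (394408 * a^3 * b^2) + (91628 * a^3 * b^3) + (9288 * a^3 * b^4) + (304 * a^3 * b^5) + (349840 * a^4 * b^0) + (387056 * a^4 * b^1) + (148836 * a^4 * b^2) + (23052 * a^4 * b^3) + (1168 * a^4 * b^4) + (140840 * a^5 * b^0) + (116852 * a^5 * b^1) + (29956 * a^5 * b^2) + (2320 * a^5 * b^3) + (35432 * a^6 * b^0) + (19596 * a^6 * b^1)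 + (2512 * a^6 * b^2) + (5092 * a^7 * b^0) + (1408 * a^7 * b^1) + (320 * a^8 * b^0)

set_option maxHeartbeats 1000000 in
set_option maxRecDepth 100000 in
lemma aux19_0 (a b : ℝ) (ha : 0 ≤ a) (hb : 0 ≤ b) :
    (0:ℝ) < B19_0 a b := by
  unfold B19_0
  have h0 : (0:ℝ) < (60928 * a^0 * b^0) := by norm_num
  have t1 : (0:ℝ) ≤ (45312 * a^0 * b^1) := mul_nonneg (mul_nonneg (by norm_num : (0:ℝ) ≤ (45312:ℝ)) (pow_nonneg ha 0)) (pow_nonneg hb 1)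
  have h1 := add_pos_of_pos_of_nonneg h0 t1
  have t2 : (0:ℝ) ≤ (11392 * a^0 * b^2) := mul_nonneg (mul_nonneg (by norm_num : (0:ℝ) ≤ (11392:ℝ)) (pow_nonneg ha 0)) (pow_nonneg hb 2)
  have h2 := add_pos_of_pos_of_nonneg h1 t2
  have t3 : (0:ℝ) ≤ (960 * a^0 * b^3) := mul_nonneg (mul_nonneg (by norm_num : (0:ℝ) ≤ (960:ℝ)) (pow_nonneg ha 0)) (pow_nonneg hb 3)
  have h3 := add_pos_of_pos_of_nonneg h2 t3
  have t4 : (0:ℝ) ≤ (270592 * a^1 * b^0) := mul_nonneg (mul_nonneg (by norm_num : (0:ℝ) ≤ (270592:ℝ)) (pow_nonneg ha 1)) (pow_nonneg hb 0)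
  have h4 := add_pos_of_pos_of_nonneg h3 t4
  have t5 : (0:ℝ) ≤ (176896 * a^1 * b^1) := mul_nonneg (mul_nonneg (by norm_num : (0:ℝ) ≤ (176896:ℝ)) (pow_nonneg ha 1)) (pow_nonneg hb 1)
  have h5 := add_pos_of_pos_of_nonneg h4 t5
  have t6 : (0:ℝ) ≤ (38208 * a^1 * b^2) := mul_nonneg (mul_nonneg (by norm_num : (0:ℝ) ≤ (38208:ℝ)) (pow_nonneg ha 1)) (pow_nonneg hb 2)
  have h6 := add_pos_of_pos_of_nonneg h5 t6
  have t7 : (0:ℝ) ≤ (2688 * a^1 * b^3) := mul_nonneg (mul_nonneg (by norm_num : (0:ℝ) ≤ (2688:ℝ)) (pow_nonneg ha 1)) (pow_nonneg hb 3)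
  have h7 := add_pos_of_pos_of_nonneg h6 t7
  have t8 : (0:ℝ) ≤ (520576 * a^2 * b^0) := mul_nonneg (mul_nonneg (by norm_num : (0:ℝ) ≤ (520576:ℝ)) (pow_nonneg ha 2)) (pow_nonneg hb 0)
  have h8 := add_pos_of_pos_of_nonneg h7 t8
  have t9 : (0:ℝ) ≤ (292800 * a^2 * b^1) := mul_nonneg (mul_nonneg (by norm_num : (0:ℝ) ≤ (292800:ℝ)) (pow_nonneg ha 2)) (pow_nonneg hb 1)
  have h9 := add_pos_of_pos_of_nonneg h8 t9
  have t10 : (0:ℝ) ≤ (52800 * a^2 * b^2) := mul_nonneg (mul_nonneg (by norm_num : (0:ℝ) ≤ (52800:ℝ)) (pow_nonneg ha 2)) (pow_nonneg hb 2)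
  have h10 := add_pos_of_pos_of_nonneg h9 t10
  have t11 : (0:ℝ) ≤ (2976 * a^2 * b^3) := mul_nonneg (mul_nonneg (by norm_num : (0:ℝ) ≤ (2976:ℝ)) (pow_nonneg ha 2)) (pow_nonneg hb 3)
  have h11 := add_pos_of_pos_of_nonneg h10 t11
  have t12 : (0:ℝ) ≤ (567616 * a^3 * b^0) := mul_nonneg (mul_nonneg (by norm_num : (0:ℝ) ≤ (567616:ℝ)) (pow_nonneg ha 3)) (pow_nonneg hb 0)
  have h12 := add_pos_of_pos_of_nonneg h11 t12
  have t13 : (0:ℝ) ≤ (266880 * a^3 * b^1) := mul_nonneg (mul_nonneg (by norm_num : (0:ℝ) ≤ (266880:ℝ)) (pow_nonneg ha 3)) (pow_nonneg hb 1)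
  have h13 := add_pos_of_pos_of_nonneg h12 t13
  have t14 : (0:ℝ) ≤ (38560 * a^3 * b^2) := mul_nonneg (mul_nonneg (by norm_num : (0:ℝ) ≤ (38560:ℝ)) (pow_nonneg ha 3)) (pow_nonneg hb 2)
  have h14 := add_pos_of_pos_of_nonneg h13 t14
  have t15 : (0:ℝ) ≤ (1632 * a^3 * b^3) := mul_nonneg (mul_nonneg (by norm_num : (0:ℝ) ≤ (1632:ℝ)) (pow_nonneg ha 3)) (pow_nonneg hb 3)
  have h15 := add_pos_of_pos_of_nonneg h14 t15
  have t16 : (0:ℝ) ≤ (384160 * a^4 * b^0) := mul_nonneg (mul_nonneg (by norm_num : (0:ℝ) ≤ (384160:ℝ)) (pow_nonneg ha 4)) (pow_nonneg hb 0)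
  have h16 := add_pos_of_pos_of_nonneg h15 t16
  have t17 : (0:ℝ) ≤ (144880 * a^4 * b^1) := mul_nonneg (mul_nonneg (by norm_num : (0:ℝ) ≤ (144880:ℝ)) (pow_nonneg ha 4)) (pow_nonneg hb 1)
  have h17 := add_pos_of_pos_of_nonneg h16 t17
  have t18 : (0:ℝ) ≤ (15720 * a^4 * b^2) := mul_nonneg (mul_nonneg (by norm_num : (0:ℝ) ≤ (15720:ℝ)) (pow_nonneg ha 4)) (pow_nonneg hb 2)
  have h18 := add_pos_of_pos_of_nonneg h17 t18
  have t19 : (0:ℝ) ≤ (444 * a^4 * b^3) := mul_nonneg (mul_nonneg (by norm_num : (0:ℝ) ≤ (444:ℝ)) (pow_nonneg ha 4)) (pow_nonneg hb 3)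
  have h19 := add_pos_of_pos_of_nonneg h18 t19
  have t20 : (0:ℝ) ≤ (165424 * a^5 * b^0) := mul_nonneg (mul_nonneg (by norm_num : (0:ℝ) ≤ (165424:ℝ)) (pow_nonneg ha 5)) (pow_nonneg hb 0)
  have h20 := add_pos_of_pos_of_nonneg h19 t20
  have t21 : (0:ℝ) ≤ (46896 * a^5 * b^1) := mul_nonneg (mul_nonneg (by norm_num : (0:ℝ) ≤ (46896:ℝ)) (pow_nonneg ha 5)) (pow_nonneg hb 1)
  have h21 := add_pos_of_pos_of_nonneg h20 t21
  have t22 : (0:ℝ) ≤ (3396 * a^5 * b^2) := mul_nonneg (mul_nonneg (by norm_num : (0:ℝ) ≤ (3396:ℝ)) (pow_nonneg ha 5)) (pow_nonneg hb 2)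
  have h22 := add_pos_of_pos_of_nonneg h21 t22
  have t23 : (0:ℝ) ≤ (48 * a^5 * b^3) := mul_nonneg (mul_nonneg (by norm_num : (0:ℝ) ≤ (48:ℝ)) (pow_nonneg ha 5)) (pow_nonneg hb 3)
  have h23 := add_pos_of_pos_of_nonneg h22 t23
  have t24 : (0:ℝ) ≤ (44296 * a^6 * b^0) := mul_nonneg (mul_nonneg (by norm_num : (0:ℝ) ≤ (44296:ℝ)) (pow_nonneg ha 6)) (pow_nonneg hb 0)
  have h24 := add_pos_of_pos_of_nonneg h23 t24
  have t25 : (0:ℝ) ≤ (8388 * a^6 * b^1) := mul_nonneg (mul_nonneg (by norm_num : (0:ℝ) ≤ (8388:ℝ)) (pow_nonneg ha 6)) (pow_nonneg hb 1)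
  have h25 := add_pos_of_pos_of_nonneg h24 t25
  have t26 : (0:ℝ) ≤ (304 * a^6 * b^2) := mul_nonneg (mul_nonneg (by norm_num : (0:ℝ) ≤ (304:ℝ)) (pow_nonneg ha 6)) (pow_nonneg hb 2)
  have h26 := add_pos_of_pos_of_nonneg h25 t26
  have t27 : (0:ℝ) ≤ (6748 * a^7 * b^0) := mul_nonneg (mul_nonneg (by norm_num : (0:ℝ) ≤ (6748:ℝ)) (pow_nonneg ha 7)) (pow_nonneg hb 0)
  have h27 := add_pos_of_pos_of_nonneg h26 t27
  have t28 : (0:ℝ) ≤ (640 * a^7 * b^1) := mul_nonneg (mul_nonneg (by norm_num : (0:ℝ) ≤ (640:ℝ)) (pow_nonneg ha 7)) (pow_nonneg hb 1)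
  have h28 := add_pos_of_pos_of_nonneg h27 t28
  have t29 : (0:ℝ) ≤ (448 * a^8 * b^0) := mul_nonneg (mul_nonneg (by norm_num : (0:ℝ) ≤ (448:ℝ)) (pow_nonneg ha 8)) (pow_nonneg hb 0)
  have h29 := add_pos_of_pos_of_nonneg h28 t29
  exact h29

set_option maxHeartbeats 1000000 in
set_option maxRecDepth 100000 in
lemma aux19_1 (a b : ℝ) (ha : 0 ≤ a) (hb : 0 ≤ b) :
    (0:ℝ) ≤ B19_1 a b := by
  unfold B19_1
  have h0 : (0:ℝ) ≤ (180736 * a^0 * b^0) := mul_nonneg (mul_nonneg (by norm_num : (0:ℝ) ≤ (180736:ℝ)) (pow_nonneg ha 0)) (pow_nonneg hb 0)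
  have t1 : (0:ℝ) ≤ (228352 * a^0 * b^1) := mul_nonneg (mul_nonneg (by norm_num : (0:ℝ) ≤ (228352:ℝ)) (pow_nonneg ha 0)) (pow_nonneg hb 1)
  have h1 := add_nonneg h0 t1
  have t2 : (0:ℝ) ≤ (102528 * a^0 * b^2) := mul_nonneg (mul_nonneg (by norm_num : (0:ℝ) ≤ (102528:ℝ)) (pow_nonneg ha 0)) (pow_nonneg hb 2)
  have h2 := add_nonneg h1 t2
  have t3 : (0:ℝ) ≤ (19840 * a^0 * b^3) := mul_nonneg (mul_nonneg (by norm_num : (0:ℝ) ≤ (19840:ℝ)) (pow_nonneg ha 0)) (pow_nonneg hb 3)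
  have h3 := add_nonneg h2 t3
  have t4 : (0:ℝ) ≤ (1408 * a^0 * b^4) := mul_nonneg (mul_nonneg (by norm_num : (0:ℝ) ≤ (1408:ℝ)) (pow_nonneg ha 0)) (pow_nonneg hb 4)
  have h4 := add_nonneg h3 t4
  have t5 : (0:ℝ) ≤ (790528 * a^1 * b^0) := mul_nonneg (mul_nonneg (by norm_num : (0:ℝ) ≤ (790528:ℝ)) (pow_nonneg ha 1)) (pow_nonneg hb 0)
  have h5 := add_nonneg h4 t5
  have t6 : (0:ℝ) ≤ (875392 * a^1 * b^1) := mul_nonneg (mul_nonneg (by norm_num : (0:ℝ) ≤ (875392:ℝ)) (pow_nonneg ha 1)) (pow_nonneg hb 1)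
  have h6 := add_nonneg h5 t6
  have t7 : (0:ℝ) ≤ (338176 * a^1 * b^2) := mul_nonneg (mul_nonneg (by norm_num : (0:ℝ) ≤ (338176:ℝ)) (pow_nonneg ha 1)) (pow_nonneg hb 2)
  have h7 := add_nonneg h6 t7
  have t8 : (0:ℝ) ≤ (54816 * a^1 * b^3) := mul_nonneg (mul_nonneg (by norm_num : (0:ℝ) ≤ (54816:ℝ)) (pow_nonneg ha 1)) (pow_nonneg hb 3)
  have h8 := add_nonneg h7 t8
  have t9 : (0:ℝ) ≤ (3136 * a^1 * b^4) := mul_nonneg (mul_nonneg (by norm_num : (0:ℝ) ≤ (3136:ℝ)) (pow_nonneg ha 1)) (pow_nonneg hb 4)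
  have h9 := add_nonneg h8 t9
  have t10 : (0:ℝ) ≤ (1501696 * a^2 * b^0) := mul_nonneg (mul_nonneg (by norm_num : (0:ℝ) ≤ (1501696:ℝ)) (pow_nonneg ha 2)) (pow_nonneg hb 0)
  have h10 := add_nonneg h9 t10
  have t11 : (0:ℝ) ≤ (1426752 * a^2 * b^1) := mul_nonneg (mul_nonneg (by norm_num : (0:ℝ) ≤ (1426752:ℝ)) (pow_nonneg ha 2)) (pow_nonneg hb 1)
  have h11 := add_nonneg h10 t11
  have t12 : (0:ℝ) ≤ (460768 * a^2 * b^2) := mul_nonneg (mul_nonneg (by norm_num : (0:ℝ) ≤ (460768:ℝ)) (pow_nonneg ha 2)) (pow_nonneg hb 2)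
  have h12 := add_nonneg h11 t12
  have t13 : (0:ℝ) ≤ (60016 * a^2 * b^3) := mul_nonneg (mul_nonneg (by norm_num : (0:ℝ) ≤ (60016:ℝ)) (pow_nonneg ha 2)) (pow_nonneg hb 3)
  have h13 := add_nonneg h12 t13
  have t14 : (0:ℝ) ≤ (2592 * a^2 * b^4) := mul_nonneg (mul_nonneg (by norm_num : (0:ℝ) ≤ (2592:ℝ)) (pow_nonneg ha 2)) (pow_nonneg hb 4)
  have h14 := add_nonneg h13 t14
  have t15 : (0:ℝ) ≤ (1619392 * a^3 * b^0) := mul_nonneg (mul_nonneg (by norm_num : (0:ℝ) ≤ (1619392:ℝ)) (pow_nonneg ha 3)) (pow_nonneg hb 0)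
  have h15 := add_nonneg h14 t15
  have t16 : (0:ℝ) ≤ (1283008 * a^3 * b^1) := mul_nonneg (mul_nonneg (by norm_num : (0:ℝ) ≤ (1283008:ℝ)) (pow_nonneg ha 3)) (pow_nonneg hb 1)
  have h16 := add_nonneg h15 t16
  have t17 : (0:ℝ) ≤ (332400 * a^3 * b^2) := mul_nonneg (mul_nonneg (by norm_num : (0:ℝ) ≤ (332400:ℝ)) (pow_nonneg ha 3)) (pow_nonneg hb 2)
  have h17 := add_nonneg h16 t17
  have t18 : (0:ℝ) ≤ (32600 * a^3 * b^3) := mul_nonneg (mul_nonneg (by norm_num : (0:ℝ) ≤ (32600:ℝ)) (pow_nonneg ha 3)) (pow_nonneg hb 3)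
  have h18 := add_nonneg h17 t18
  have t19 : (0:ℝ) ≤ (944 * a^3 * b^4) := mul_nonneg (mul_nonneg (by norm_num : (0:ℝ) ≤ (944:ℝ)) (pow_nonneg ha 3)) (pow_nonneg hb 4)
  have h19 := add_nonneg h18 t19
  have t20 : (0:ℝ) ≤ (1084960 * a^4 * b^0) := mul_nonneg (mul_nonneg (by norm_num : (0:ℝ) ≤ (1084960:ℝ)) (pow_nonneg ha 4)) (pow_nonneg hb 0)
  have h20 := add_nonneg h19 t20
  have t21 : (0:ℝ) ≤ (688096 * a^4 * b^1) := mul_nonneg (mul_nonneg (by norm_num : (0:ℝ) ≤ (688096:ℝ)) (pow_nonneg ha 4)) (pow_nonneg hb 1)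
  have h21 := add_nonneg h20 t21
  have t22 : (0:ℝ) ≤ (134048 * a^4 * b^2) := mul_nonneg (mul_nonneg (by norm_num : (0:ℝ) ≤ (134048:ℝ)) (pow_nonneg ha 4)) (pow_nonneg hb 2)
  have h22 := add_nonneg h21 t22
  have t23 : (0:ℝ) ≤ (8796 * a^4 * b^3) := mul_nonneg (mul_nonneg (by norm_num : (0:ℝ) ≤ (8796:ℝ)) (pow_nonneg ha 4)) (pow_nonneg hb 3)
  have h23 := add_nonneg h22 t23
  have t24 : (0:ℝ) ≤ (128 * a^4 * b^4) := mul_nonneg (mul_nonneg (by norm_num : (0:ℝ) ≤ (128:ℝ)) (pow_nonneg ha 4)) (pow_nonneg hb 4)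
  have h24 := add_nonneg h23 t24
  have t25 : (0:ℝ) ≤ (462688 * a^5 * b^0) := mul_nonneg (mul_nonneg (by norm_num : (0:ℝ) ≤ (462688:ℝ)) (pow_nonneg ha 5)) (pow_nonneg hb 0)
  have h25 := add_nonneg h24 t25
  have t26 : (0:ℝ) ≤ (220248 * a^5 * b^1) := mul_nonneg (mul_nonneg (by norm_num : (0:ℝ) ≤ (220248:ℝ)) (pow_nonneg ha 5)) (pow_nonneg hb 1)
  have h26 := add_nonneg h25 t26
  have t27 : (0:ℝ) ≤ (28676 * a^5 * b^2) := mul_nonneg (mul_nonneg (by norm_num : (0:ℝ) ≤ (28676:ℝ)) (pow_nonneg ha 5)) (pow_nonneg hb 2)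
  have h27 := add_nonneg h26 t27
  have t28 : (0:ℝ) ≤ (944 * a^5 * b^3) := mul_nonneg (mul_nonneg (by norm_num : (0:ℝ) ≤ (944:ℝ)) (pow_nonneg ha 5)) (pow_nonneg hb 3)
  have h28 := add_nonneg h27 t28
  have t29 : (0:ℝ) ≤ (122704 * a^6 * b^0) := mul_nonneg (mul_nonneg (by norm_num : (0:ℝ) ≤ (122704:ℝ)) (pow_nonneg ha 6)) (pow_nonneg hb 0)
  have h29 := add_nonneg h28 t29
  have t30 : (0:ℝ) ≤ (38980 * a^6 * b^1) := mul_nonneg (mul_nonneg (by norm_num : (0:ℝ) ≤ (38980:ℝ)) (pow_nonneg ha 6)) (pow_nonneg hb 1)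
  have h30 := add_nonneg h29 t30
  have t31 : (0:ℝ) ≤ (2544 * a^6 * b^2) := mul_nonneg (mul_nonneg (by norm_num : (0:ℝ) ≤ (2544:ℝ)) (pow_nonneg ha 6)) (pow_nonneg hb 2)
  have h31 := add_nonneg h30 t31
  have t32 : (0:ℝ) ≤ (18508 * a^7 * b^0) := mul_nonneg (mul_nonneg (by norm_num : (0:ℝ) ≤ (18508:ℝ)) (pow_nonneg ha 7)) (pow_nonneg hb 0)
  have h32 := add_nonneg h31 t32
  have t33 : (0:ℝ) ≤ (2944 * a^7 * b^1) := mul_nonneg (mul_nonneg (by norm_num : (0:ℝ) ≤ (2944:ℝ)) (pow_nonneg ha 7)) (pow_nonneg hb 1)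
  have h33 := add_nonneg h32 t33
  have t34 : (0:ℝ) ≤ (1216 * a^8 * b^0) := mul_nonneg (mul_nonneg (by norm_num : (0:ℝ) ≤ (1216:ℝ)) (pow_nonneg ha 8)) (pow_nonneg hb 0)
  have h34 := add_nonneg h33 t34
  exact h34

set_option maxHeartbeats 1000000 in
set_option maxRecDepth 100000 in
lemma aux19_2 (a b : ℝ) (ha : 0 ≤ a) (hb : 0 ≤ b) :
    (0:ℝ) ≤ B19_2 a b := by
  unfold B19_2
  have h0 : (0:ℝ) ≤ (205568 * a^0 * b^0) := mul_nonneg (mul_nonneg (by norm_num : (0:ℝ) ≤ (205568:ℝ)) (pow_nonneg ha 0)) (pow_nonneg hb 0)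
  have t1 : (0:ℝ) ≤ (357632 * a^0 * b^1) := mul_nonneg (mul_nonneg (by norm_num : (0:ℝ) ≤ (357632:ℝ)) (pow_nonneg ha 0)) (pow_nonneg hb 1)
  have h1 := add_nonneg h0 t1
  have t2 : (0:ℝ) ≤ (239488 * a^0 * b^2) := mul_nonneg (mul_nonneg (by norm_num : (0:ℝ) ≤ (239488:ℝ)) (pow_nonneg ha 0)) (pow_nonneg hb 2)
  have h2 := add_nonneg h1 t2
  have t3 : (0:ℝ) ≤ (77248 * a^0 * b^3) := mul_nonneg (mul_nonneg (by norm_num : (0:ℝ) ≤ (77248:ℝ)) (pow_nonneg ha 0)) (pow_nonneg hb 3)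
  have h3 := add_nonneg h2 t3
  have t4 : (0:ℝ) ≤ (12080 * a^0 * b^4) := mul_nonneg (mul_nonneg (by norm_num : (0:ℝ) ≤ (12080:ℝ)) (pow_nonneg ha 0)) (pow_nonneg hb 4)
  have h4 := add_nonneg h3 t4
  have t5 : (0:ℝ) ≤ (736 * a^0 * b^5) := mul_nonneg (mul_nonneg (by norm_num : (0:ℝ) ≤ (736:ℝ)) (pow_nonneg ha 0)) (pow_nonneg hb 5)
  have h5 := add_nonneg h4 t5
  have t6 : (0:ℝ) ≤ (859776 * a^1 * b^0) := mul_nonneg (mul_nonneg (by norm_num : (0:ℝ) ≤ (859776:ℝ)) (pow_nonneg ha 1)) (pow_nonneg hb 0)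
  have h6 := add_nonneg h5 t6
  have t7 : (0:ℝ) ≤ (1311808 * a^1 * b^1) := mul_nonneg (mul_nonneg (by norm_num : (0:ℝ) ≤ (1311808:ℝ)) (pow_nonneg ha 1)) (pow_nonneg hb 1)
  have h7 := add_nonneg h6 t7
  have t8 : (0:ℝ) ≤ (755488 * a^1 * b^2) := mul_nonneg (mul_nonneg (by norm_num : (0:ℝ) ≤ (755488:ℝ)) (pow_nonneg ha 1)) (pow_nonneg hb 2)
  have h8 := add_nonneg h7 t8
  have t9 : (0:ℝ) ≤ (204016 * a^1 * b^3) := mul_nonneg (mul_nonneg (by norm_num : (0:ℝ) ≤ (204016:ℝ)) (pow_nonneg ha 1)) (pow_nonneg hb 3)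
  have h9 := add_nonneg h8 t9
  have t10 : (0:ℝ) ≤ (25680 * a^1 * b^4) := mul_nonneg (mul_nonneg (by norm_num : (0:ℝ) ≤ (25680:ℝ)) (pow_nonneg ha 1)) (pow_nonneg hb 4)
  have h10 := add_nonneg h9 t10
  have t11 : (0:ℝ) ≤ (1184 * a^1 * b^5) := mul_nonneg (mul_nonneg (by norm_num : (0:ℝ) ≤ (1184:ℝ)) (pow_nonneg ha 1)) (pow_nonneg hb 5)
  have h11 := add_nonneg h10 t11
  have t12 : (0:ℝ) ≤ (1570688 * a^2 * b^0) := mul_nonneg (mul_nonneg (by norm_num : (0:ℝ) ≤ (1570688:ℝ)) (pow_nonneg ha 2)) (pow_nonneg hb 0)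
  have h12 := add_nonneg h11 t12
  have t13 : (0:ℝ) ≤ (2057920 * a^2 * b^1) := mul_nonneg (mul_nonneg (by norm_num : (0:ℝ) ≤ (2057920:ℝ)) (pow_nonneg ha 2)) (pow_nonneg hb 1)
  have h13 := add_nonneg h12 t13
  have t14 : (0:ℝ) ≤ (990480 * a^2 * b^2) := mul_nonneg (mul_nonneg (by norm_num : (0:ℝ) ≤ (990480:ℝ)) (pow_nonneg ha 2)) (pow_nonneg hb 2)
  have h14 := add_nonneg h13 t14
  have t15 : (0:ℝ) ≤ (214864 * a^2 * b^3) := mul_nonneg (mul_nonneg (by norm_num : (0:ℝ) ≤ (214864:ℝ)) (pow_nonneg ha 2)) (pow_nonneg hb 3)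
  have h15 := add_nonneg h14 t15
  have t16 : (0:ℝ) ≤ (20396 * a^2 * b^4) := mul_nonneg (mul_nonneg (by norm_num : (0:ℝ) ≤ (20396:ℝ)) (pow_nonneg ha 2)) (pow_nonneg hb 4)
  have h16 := add_nonneg h15 t16
  have t17 : (0:ℝ) ≤ (632 * a^2 * b^5) := mul_nonneg (mul_nonneg (by norm_num : (0:ℝ) ≤ (632:ℝ)) (pow_nonneg ha 2)) (pow_nonneg hb 5)
  have h17 := add_nonneg h16 t17
  have t18 : (0:ℝ) ≤ (1636736 * a^3 * b^0) := mul_nonneg (mul_nonneg (by norm_num : (0:ℝ) ≤ (1636736:ℝ)) (pow_nonneg ha 3)) (pow_nonneg hb 0)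
  have h18 := add_nonneg h17 t18
  have t19 : (0:ℝ) ≤ (1789792 * a^3 * b^1) := mul_nonneg (mul_nonneg (by norm_num : (0:ℝ) ≤ (1789792:ℝ)) (pow_nonneg ha 3)) (pow_nonneg hb 1)
  have h19 := add_nonneg h18 t19
  have t20 : (0:ℝ) ≤ (690888 * a^3 * b^2) := mul_nonneg (mul_nonneg (by norm_num : (0:ℝ) ≤ (690888:ℝ)) (pow_nonneg ha 3)) (pow_nonneg hb 2)
  have h20 := add_nonneg h19 t20
  have t21 : (0:ℝ) ≤ (112828 * a^3 * b^3) := mul_nonneg (mul_nonneg (by norm_num : (0:ℝ) ≤ (112828:ℝ)) (pow_nonneg ha 3)) (pow_nonneg hb 3)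
  have h21 := add_nonneg h20 t21
  have t22 : (0:ℝ) ≤ (7176 * a^3 * b^4) := mul_nonneg (mul_nonneg (by norm_num : (0:ℝ) ≤ (7176:ℝ)) (pow_nonneg ha 3)) (pow_nonneg hb 4)
  have h22 := add_nonneg h21 t22
  have t23 : (0:ℝ) ≤ (112 * a^3 * b^5) := mul_nonneg (mul_nonneg (by norm_num : (0:ℝ) ≤ (112:ℝ)) (pow_nonneg ha 3)) (pow_nonneg hb 5)
  have h23 := add_nonneg h22 t23
  have t24 : (0:ℝ) ≤ (1063920 * a^4 * b^0) := mul_nonneg (mul_nonneg (by norm_num : (0:ℝ) ≤ (1063920:ℝ)) (pow_nonneg ha 4)) (pow_nonneg hb 0)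
  have h24 := add_nonneg h23 t24
  have t25 : (0:ℝ) ≤ (931984 * a^4 * b^1) := mul_nonneg (mul_nonneg (by norm_num : (0:ℝ) ≤ (931984:ℝ)) (pow_nonneg ha 4)) (pow_nonneg hb 1)
  have h25 := add_nonneg h24 t25
  have t26 : (0:ℝ) ≤ (270452 * a^4 * b^2) := mul_nonneg (mul_nonneg (by norm_num : (0:ℝ) ≤ (270452:ℝ)) (pow_nonneg ha 4)) (pow_nonneg hb 2)
  have h26 := add_nonneg h25 t26
  have t27 : (0:ℝ) ≤ (29548 * a^4 * b^3) := mul_nonneg (mul_nonneg (by norm_num : (0:ℝ) ≤ (29548:ℝ)) (pow_nonneg ha 4)) (pow_nonneg hb 3)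
  have h27 := add_nonneg h26 t27
  have t28 : (0:ℝ) ≤ (944 * a^4 * b^4) := mul_nonneg (mul_nonneg (by norm_num : (0:ℝ) ≤ (944:ℝ)) (pow_nonneg ha 4)) (pow_nonneg hb 4)
  have h28 := add_nonneg h27 t28
  have t29 : (0:ℝ) ≤ (441704 * a^5 * b^0) := mul_nonneg (mul_nonneg (by norm_num : (0:ℝ) ≤ (441704:ℝ)) (pow_nonneg ha 5)) (pow_nonneg hb 0)
  have h29 := add_nonneg h28 t29
  have t30 : (0:ℝ) ≤ (290564 * a^5 * b^1) := mul_nonneg (mul_nonneg (by norm_num : (0:ℝ) ≤ (290564:ℝ)) (pow_nonneg ha 5)) (pow_nonneg hb 1)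
  have h30 := add_nonneg h29 t30
  have t31 : (0:ℝ) ≤ (56340 * a^5 * b^2) := mul_nonneg (mul_nonneg (by norm_num : (0:ℝ) ≤ (56340:ℝ)) (pow_nonneg ha 5)) (pow_nonneg hb 2)
  have h31 := add_nonneg h30 t31
  have t32 : (0:ℝ) ≤ (3088 * a^5 * b^3) := mul_nonneg (mul_nonneg (by norm_num : (0:ℝ) ≤ (3088:ℝ)) (pow_nonneg ha 5)) (pow_nonneg hb 3)
  have h32 := add_nonneg h31 t32
  have t33 : (0:ℝ) ≤ (114368 * a^6 * b^0) := mul_nonneg (mul_nonneg (by norm_num : (0:ℝ) ≤ (114368:ℝ)) (pow_nonneg ha 6)) (pow_nonneg hb 0)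
  have h33 := add_nonneg h32 t33
  have t34 : (0:ℝ) ≤ (50220 * a^6 * b^1) := mul_nonneg (mul_nonneg (by norm_num : (0:ℝ) ≤ (50220:ℝ)) (pow_nonneg ha 6)) (pow_nonneg hb 1)
  have h34 := add_nonneg h33 t34
  have t35 : (0:ℝ) ≤ (4880 * a^6 * b^2) := mul_nonneg (mul_nonneg (by norm_num : (0:ℝ) ≤ (4880:ℝ)) (pow_nonneg ha 6)) (pow_nonneg hb 2)
  have h35 := add_nonneg h34 t35
  have t36 : (0:ℝ) ≤ (16884 * a^7 * b^0) := mul_nonneg (mul_nonneg (by norm_num : (0:ℝ) ≤ (16884:ℝ)) (pow_nonneg ha 7)) (pow_nonneg hb 0)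
  have h36 := add_nonneg h35 t36
  have t37 : (0:ℝ) ≤ (3712 * a^7 * b^1) := mul_nonneg (mul_nonneg (by norm_num : (0:ℝ) ≤ (3712:ℝ)) (pow_nonneg ha 7)) (pow_nonneg hb 1)
  have h37 := add_nonneg h36 t37
  have t38 : (0:ℝ) ≤ (1088 * a^8 * b^0) := mul_nonneg (mul_nonneg (by norm_num : (0:ℝ) ≤ (1088:ℝ)) (pow_nonneg ha 8)) (pow_nonneg hb 0)
  have h38 := add_nonneg h37 t38
  exact h38

set_option maxHeartbeats 1000000 in
set_option maxRecDepth 100000 in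
lemma aux19_3 (a b : ℝ) (ha : 0 ≤ a) (hb : 0 ≤ b) :
    (0:ℝ) ≤ B19_3 a b := by
  unfold B19_3
  have h0 : (0:ℝ) ≤ (78080 * a^0 * b^0) := mul_nonneg (mul_nonneg (by norm_num : (0:ℝ) ≤ (78080:ℝ)) (pow_nonneg ha 0)) (pow_nonneg hb 0)
  have t1 : (0:ℝ) ≤ (172800 * a^0 * b^1) := mul_nonneg (mul_nonneg (by norm_num : (0:ℝ) ≤ (172800:ℝ)) (pow_nonneg ha 0)) (pow_nonneg hb 1)
  have h1 := add_nonneg h0 t1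
  have t2 : (0:ℝ) ≤ (155008 * a^0 * b^2) := mul_nonneg (mul_nonneg (by norm_num : (0:ℝ) ≤ (155008:ℝ)) (pow_nonneg ha 0)) (pow_nonneg hb 2)
  have h2 := add_nonneg h1 t2
  have t3 : (0:ℝ) ≤ (72000 * a^0 * b^3) := mul_nonneg (mul_nonneg (by norm_num : (0:ℝ) ≤ (72000:ℝ)) (pow_nonneg ha 0)) (pow_nonneg hb 3)
  have h3 := add_nonneg h2 t3
  have t4 : (0:ℝ) ≤ (18256 * a^0 * b^4) := mul_nonneg (mul_nonneg (by norm_num : (0:ℝ) ≤ (18256:ℝ)) (pow_nonneg ha 0)) (pow_nonneg hb 4)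
  have h4 := add_nonneg h3 t4
  have t5 : (0:ℝ) ≤ (2400 * a^0 * b^5) := mul_nonneg (mul_nonneg (by norm_num : (0:ℝ) ≤ (2400:ℝ)) (pow_nonneg ha 0)) (pow_nonneg hb 5)
  have h5 := add_nonneg h4 t5
  have t6 : (0:ℝ) ≤ (128 * a^0 * b^6) := mul_nonneg (mul_nonneg (by norm_num : (0:ℝ) ≤ (128:ℝ)) (pow_nonneg ha 0)) (pow_nonneg hb 6)
  have h6 := add_nonneg h5 t6
  have t7 : (0:ℝ) ≤ (313984 * a^1 * b^0) := mul_nonneg (mul_nonneg (by norm_num : (0:ℝ) ≤ (313984:ℝ)) (pow_nonneg ha 1)) (pow_nonneg hb 0)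
  have h7 := add_nonneg h6 t7
  have t8 : (0:ℝ) ≤ (608064 * a^1 * b^1) := mul_nonneg (mul_nonneg (by norm_num : (0:ℝ) ≤ (608064:ℝ)) (pow_nonneg ha 1)) (pow_nonneg hb 1)
  have h8 := add_nonneg h7 t8
  have t9 : (0:ℝ) ≤ (467616 * a^1 * b^2) := mul_nonneg (mul_nonneg (by norm_num : (0:ℝ) ≤ (467616:ℝ)) (pow_nonneg ha 1)) (pow_nonneg hb 2)
  have h9 := add_nonneg h8 t9
  have t10 : (0:ℝ) ≤ (181040 * a^1 * b^3) := mul_nonneg (mul_nonneg (by norm_num : (0:ℝ) ≤ (181040:ℝ)) (pow_nonneg ha 1)) (pow_nonneg hb 3)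
  have h10 := add_nonneg h9 t10
  have t11 : (0:ℝ) ≤ (36720 * a^1 * b^4) := mul_nonneg (mul_nonneg (by norm_num : (0:ℝ) ≤ (36720:ℝ)) (pow_nonneg ha 1)) (pow_nonneg hb 4)
  have h11 := add_nonneg h10 t11
  have t12 : (0:ℝ) ≤ (3616 * a^1 * b^5) := mul_nonneg (mul_nonneg (by norm_num : (0:ℝ) ≤ (3616:ℝ)) (pow_nonneg ha 1)) (pow_nonneg hb 5)
  have h12 := add_nonneg h11 t12
  have t13 : (0:ℝ) ≤ (128 * a^1 * b^6) := mul_nonneg (mul_nonneg (by norm_num : (0:ℝ) ≤ (128:ℝ)) (pow_nonneg ha 1)) (pow_nonneg hb 6)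
  have h13 := add_nonneg h12 t13
  have t14 : (0:ℝ) ≤ (552704 * a^2 * b^0) := mul_nonneg (mul_nonneg (by norm_num : (0:ℝ) ≤ (552704:ℝ)) (pow_nonneg ha 2)) (pow_nonneg hb 0)
  have h14 := add_nonneg h13 t14
  have t15 : (0:ℝ) ≤ (917440 * a^2 * b^1) := mul_nonneg (mul_nonneg (by norm_num : (0:ℝ) ≤ (917440:ℝ)) (pow_nonneg ha 2)) (pow_nonneg hb 1)
  have h15 := add_nonneg h14 t15
  have t16 : (0:ℝ) ≤ (587984 * a^2 * b^2) := mul_nonneg (mul_nonneg (by norm_num : (0:ℝ) ≤ (587984:ℝ)) (pow_nonneg ha 2)) (pow_nonneg hb 2)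
  have h16 := add_nonneg h15 t16
  have t17 : (0:ℝ) ≤ (182128 * a^2 * b^3) := mul_nonneg (mul_nonneg (by norm_num : (0:ℝ) ≤ (182128:ℝ)) (pow_nonneg ha 2)) (pow_nonneg hb 3)
  have h17 := add_nonneg h16 t17
  have t18 : (0:ℝ) ≤ (27700 * a^2 * b^4) := mul_nonneg (mul_nonneg (by norm_num : (0:ℝ) ≤ (27700:ℝ)) (pow_nonneg ha 2)) (pow_nonneg hb 4)
  have h18 := add_nonneg h17 t18
  have t19 : (0:ℝ) ≤ (1816 * a^2 * b^5) := mul_nonneg (mul_nonneg (by norm_num : (0:ℝ) ≤ (1816:ℝ)) (pow_nonneg ha 2)) (pow_nonneg hb 5)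
  have h19 := add_nonneg h18 t19
  have t20 : (0:ℝ) ≤ (32 * a^2 * b^6) := mul_nonneg (mul_nonneg (by norm_num : (0:ℝ) ≤ (32:ℝ)) (pow_nonneg ha 2)) (pow_nonneg hb 6)
  have h20 := add_nonneg h19 t20
  have t21 : (0:ℝ) ≤ (556160 * a^3 * b^0) := mul_nonneg (mul_nonneg (by norm_num : (0:ℝ) ≤ (556160:ℝ)) (pow_nonneg ha 3)) (pow_nonneg hb 0)
  have h21 := add_nonneg h20 t21
  have t22 : (0:ℝ) ≤ (769248 * a^3 * b^1) := mul_nonneg (mul_nonneg (by norm_num : (0:ℝ) ≤ (769248:ℝ)) (pow_nonneg ha 3)) (pow_nonneg hb 1)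
  have h22 := add_nonneg h21 t22
  have t23 : (0:ℝ) ≤ (394408 * a^3 * b^2) := mul_nonneg (mul_nonneg (by norm_num : (0:ℝ) ≤ (394408:ℝ)) (pow_nonneg ha 3)) (pow_nonneg hb 2)
  have h23 := add_nonneg h22 t23
  have t24 : (0:ℝ) ≤ (91628 * a^3 * b^3) := mul_nonneg (mul_nonneg (by norm_num : (0:ℝ) ≤ (91628:ℝ)) (pow_nonneg ha 3)) (pow_nonneg hb 3)
  have h24 := add_nonneg h23 t24
  have t25 : (0:ℝ) ≤ (9288 * a^3 * b^4) := mul_nonneg (mul_nonneg (by norm_num : (0:ℝ) ≤ (9288:ℝ)) (pow_nonneg ha 3)) (pow_nonneg hb 4)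
  have h25 := add_nonneg h24 t25
  have t26 : (0:ℝ) ≤ (304 * a^3 * b^5) := mul_nonneg (mul_nonneg (by norm_num : (0:ℝ) ≤ (304:ℝ)) (pow_nonneg ha 3)) (pow_nonneg hb 5)
  have h26 := add_nonneg h25 t26
  have t27 : (0:ℝ) ≤ (349840 * a^4 * b^0) := mul_nonneg (mul_nonneg (by norm_num : (0:ℝ) ≤ (349840:ℝ)) (pow_nonneg ha 4)) (pow_nonneg hb 0)
  have h27 := add_nonneg h26 t27
  have t28 : (0:ℝ) ≤ (387056 * a^4 * b^1) := mul_nonneg (mul_nonneg (by norm_num : (0:ℝ) ≤ (387056:ℝ)) (pow_nonneg ha 4)) (pow_nonneg hb 1)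
  have h28 := add_nonneg h27 t28
  have t29 : (0:ℝ) ≤ (148836 * a^4 * b^2) := mul_nonneg (mul_nonneg (by norm_num : (0:ℝ) ≤ (148836:ℝ)) (pow_nonneg ha 4)) (pow_nonneg hb 2)
  have h29 := add_nonneg h28 t29
  have t30 : (0:ℝ) ≤ (23052 * a^4 * b^3) := mul_nonneg (mul_nonneg (by norm_num : (0:ℝ) ≤ (23052:ℝ)) (pow_nonneg ha 4)) (pow_nonneg hb 3)
  have h30 := add_nonneg h29 t30
  have t31 : (0:ℝ) ≤ (1168 * a^4 * b^4) := mul_nonneg (mul_nonneg (by norm_num : (0:ℝ) ≤ (1168:ℝ)) (pow_nonneg ha 4)) (pow_nonneg hb 4)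
  have h31 := add_nonneg h30 t31
  have t32 : (0:ℝ) ≤ (140840 * a^5 * b^0) := mul_nonneg (mul_nonneg (by norm_num : (0:ℝ) ≤ (140840:ℝ)) (pow_nonneg ha 5)) (pow_nonneg hb 0)
  have h32 := add_nonneg h31 t32
  have t33 : (0:ℝ) ≤ (116852 * a^5 * b^1) := mul_nonneg (mul_nonneg (by norm_num : (0:ℝ) ≤ (116852:ℝ)) (pow_nonneg ha 5)) (pow_nonneg hb 1)
  have h33 := add_nonneg h32 t33
  have t34 : (0:ℝ) ≤ (29956 * a^5 * b^2) := mul_nonneg (mul_nonneg (by norm_num : (0:ℝ) ≤ (29956:ℝ)) (pow_nonneg ha 5)) (pow_nonneg hb 2)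
  have h34 := add_nonneg h33 t34
  have t35 : (0:ℝ) ≤ (2320 * a^5 * b^3) := mul_nonneg (mul_nonneg (by norm_num : (0:ℝ) ≤ (2320:ℝ)) (pow_nonneg ha 5)) (pow_nonneg hb 3)
  have h35 := add_nonneg h34 t35
  have t36 : (0:ℝ) ≤ (35432 * a^6 * b^0) := mul_nonneg (mul_nonneg (by norm_num : (0:ℝ) ≤ (35432:ℝ)) (pow_nonneg ha 6)) (pow_nonneg hb 0)
  have h36 := add_nonneg h35 t36
  have t37 : (0:ℝ) ≤ (19596 * a^6 * b^1) := mul_nonneg (mul_nonneg (by norm_num : (0:ℝ) ≤ (19596:ℝ)) (pow_nonneg ha 6)) (pow_nonneg hb 1)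
  have h37 := add_nonneg h36 t37
  have t38 : (0:ℝ) ≤ (2512 * a^6 * b^2) := mul_nonneg (mul_nonneg (by norm_num : (0:ℝ) ≤ (2512:ℝ)) (pow_nonneg ha 6)) (pow_nonneg hb 2)
  have h38 := add_nonneg h37 t38
  have t39 : (0:ℝ) ≤ (5092 * a^7 * b^0) := mul_nonneg (mul_nonneg (by norm_num : (0:ℝ) ≤ (5092:ℝ)) (pow_nonneg ha 7)) (pow_nonneg hb 0)
  have h39 := add_nonneg h38 t39
  have t40 : (0:ℝ) ≤ (1408 * a^7 * b^1) := mul_nonneg (mul_nonneg (by norm_num : (0:ℝ) ≤ (1408:ℝ)) (pow_nonneg ha 7)) (pow_nonneg hb 1)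
  have h40 := add_nonneg h39 t40
  have t41 : (0:ℝ) ≤ (320 * a^8 * b^0) := mul_nonneg (mul_nonneg (by norm_num : (0:ℝ) ≤ (320:ℝ)) (pow_nonneg ha 8)) (pow_nonneg hb 0)
  have h41 := add_nonneg h40 t41
  exact h41

set_option maxHeartbeats 4000000 in
set_option maxRecDepth 100000 in
/-- For A ≥ Ψ(d1,d2) and k ∈ (0,1), ρ₁(k)·A - ρ₀(k) > 0, where n = d1 + d2. -/
theorem stmt_19 (d1 d2 : ℕ) (h1 : 2 ≤ d1) (h2 : d1 ≤ d2) (A : ℝ)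
    (hA : A ≥ ((4*((d1:ℝ) - 1)*((d1:ℝ) + d2)^2 + d2^2) * (3*((d1:ℝ) + d2) + d1))
        / ((2*((d1:ℝ) + d2)^2 + ((d1:ℝ) + d2) + d1)^2 * d1^2)
      * ((d2:ℝ) * (d2 - 1)^2 / (4 * (d1 - 1))))
    (k : ℝ) (hk1 : 0 < k) (hk2 : k < 1) :
    0 < 4*(d1:ℝ)^2*(d1 - 1)*(2*d2^2*k^2 + d2*k^2 + 4*d1*d2*k + 2*d1*k + 2*d1^2)^2 * A
      - ((d2:ℝ) - 1)^2 * k * d2 * (4*d1 + 3*d2*k)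
        * (4*((d1:ℝ) - 1)*(d1 + d2*k)^2 + d2^2*k^2) := by
  have hx : (2:ℝ) ≤ (d1:ℝ) := by exact_mod_cast h1
  have hy : (d1:ℝ) ≤ (d2:ℝ) := by exact_mod_cast h2
  have ha : (0:ℝ) ≤ (d1:ℝ) - 2 := by linarith
  have hb : (0:ℝ) ≤ (d2:ℝ) - (d1:ℝ) := by linarith
  have hk0 : (0:ℝ) ≤ k := hk1.le
  have hin1 : (0:ℝ) < 2*(d2:ℝ)^2 + (d2:ℝ) + 4*(d1:ℝ)*(d2:ℝ) + 2*(d1:ℝ) + 2*(d1:ℝ)^2 := by nlinarith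
  have hink : (0:ℝ) < 2*(d2:ℝ)^2*k^2 + (d2:ℝ)*k^2 + 4*(d1:ℝ)*(d2:ℝ)*k + 2*(d1:ℝ)*k + 2*(d1:ℝ)^2 := by
    nlinarith [mul_nonneg (mul_nonneg (by linarith : (0:ℝ) ≤ (d2:ℝ)) hb) (mul_pos hk1 hk1).le,
      mul_nonneg (mul_nonneg (by linarith : (0:ℝ) ≤ (d1:ℝ)) (by linarith : (0:ℝ) ≤ (d2:ℝ))) hk0,
      mul_nonneg (by linarith : (0:ℝ) ≤ (d1:ℝ)) hk0, mul_pos hk1 hk1,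
      mul_nonneg (mul_nonneg (by linarith : (0:ℝ) ≤ (d2:ℝ)) hk0) hk0]
  have hr11 : (0:ℝ) < 4*(d1:ℝ)^2*((d1:ℝ) - 1)*(2*(d2:ℝ)^2 + (d2:ℝ) + 4*(d1:ℝ)*(d2:ℝ) + 2*(d1:ℝ) + 2*(d1:ℝ)^2)^2 := by
    have h := mul_pos (mul_pos (show (0:ℝ) < 4*(d1:ℝ)^2*((d1:ℝ) - 1) by nlinarith) hin1) hin1
    nlinarith [h]
  have hr1k : (0:ℝ) < 4*(d1:ℝ)^2*((d1:ℝ) - 1)*(2*(d2:ℝ)^2*k^2 + (d2:ℝ)*k^2 + 4*(d1:ℝ)*(d2:ℝ)*k + 2*(d1:ℝ)*k + 2*(d1:ℝ)^2)^2 := by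
    have h := mul_pos (mul_pos (show (0:ℝ) < 4*(d1:ℝ)^2*((d1:ℝ) - 1) by nlinarith) hink) hink
    nlinarith [h]
  have hA' : ((d2:ℝ) - 1)^2 * (d2:ℝ) * (4*(d1:ℝ) + 3*(d2:ℝ)) * (4*((d1:ℝ) - 1)*((d1:ℝ) + (d2:ℝ))^2 + (d2:ℝ)^2) ≤ A * (4*(d1:ℝ)^2*((d1:ℝ) - 1)*(2*(d2:ℝ)^2 + (d2:ℝ) + 4*(d1:ℝ)*(d2:ℝ) + 2*(d1:ℝ) + 2*(d1:ℝ)^2)^2) := by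
    have hne1 : ((2*(((d1:ℝ)) + (d2:ℝ))^2 + (((d1:ℝ)) + (d2:ℝ)) + (d1:ℝ))^2 * (d1:ℝ)^2) ≠ 0 := by positivity
    have hne2 : (4 * ((d1:ℝ) - 1)) ≠ 0 := by
      have : (0:ℝ) < 4 * ((d1:ℝ) - 1) := by linarith
      exact ne_of_gt this
    have hid : (((4*(((d1:ℝ)) - 1)*(((d1:ℝ)) + (d2:ℝ))^2 + (d2:ℝ)^2) * (3*(((d1:ℝ)) + (d2:ℝ)) + (d1:ℝ))) / ((2*(((d1:ℝ)) + (d2:ℝ))^2 + (((d1:ℝ)) + (d2:ℝ)) + (d1:ℝ))^2 * (d1:ℝ)^2) * (((d2:ℝ)) * ((d2:ℝ) - 1)^2 / (4 * ((d1:ℝ) - 1)))) * (4*(d1:ℝ)^2*((d1:ℝ) - 1)*(2*(d2:ℝ)^2 + (d2:ℝ) + 4*(d1:ℝ)*(d2:ℝ) + 2*(d1:ℝ) + 2*(d1:ℝ)^2)^2) = ((d2:ℝ) - 1)^2 * (d2:ℝ) * (4*(d1:ℝ) + 3*(d2:ℝ)) * (4*((d1:ℝ) - 1)*((d1:ℝ)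 + (d2:ℝ))^2 + (d2:ℝ)^2) := by
      rw [div_mul_div_comm, div_mul_eq_mul_div, div_eq_iff (mul_ne_zero hne1 hne2)]
      ring
    have hmul := mul_le_mul_of_nonneg_right hA hr11.le
    linarith [hmul, hid]
  have hH : (0:ℝ) < (B19_0 ((d1:ℝ) - 2) ((d2:ℝ) - (d1:ℝ)) + B19_1 ((d1:ℝ) - 2) ((d2:ℝ) - (d1:ℝ)) * k + B19_2 ((d1:ℝ) - 2) ((d2:ℝ) - (d1:ℝ)) * k^2 + B19_3 ((d1:ℝ) - 2) ((d2:ℝ) - (d1:ℝ)) * k^3) :=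
    add_pos_of_pos_of_nonneg (add_pos_of_pos_of_nonneg (add_pos_of_pos_of_nonneg
      (aux19_0 ((d1:ℝ) - 2) ((d2:ℝ) - (d1:ℝ)) ha hb)
      (mul_nonneg (aux19_1 ((d1:ℝ) - 2) ((d2:ℝ) - (d1:ℝ)) ha hb) hk0))
      (mul_nonneg (aux19_2 ((d1:ℝ) - 2) ((d2:ℝ) - (d1:ℝ)) ha hb) (pow_nonneg hk0 2)))
      (mul_nonneg (aux19_3 ((d1:ℝ) - 2) ((d2:ℝ) - (d1:ℝ)) ha hb) (pow_nonneg hk0 3))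
  have hC : (0:ℝ) < 4*(d1:ℝ)^2*((d1:ℝ) - 1)*(d2:ℝ)*((d2:ℝ) - 1)^2 :=
    mul_pos (mul_pos (show (0:ℝ) < 4*(d1:ℝ)^2*((d1:ℝ) - 1) by nlinarith) (show (0:ℝ) < (d2:ℝ) by linarith))
      (show (0:ℝ) < ((d2:ℝ) - 1)^2 by nlinarith)
  have hF : (0:ℝ) < 4*(d1:ℝ)^2*((d1:ℝ) - 1)*(d2:ℝ)*((d2:ℝ) - 1)^2 * ((1 - k) * (B19_0 ((d1:ℝ) - 2) ((d2:ℝ) - (d1:ℝ)) + B19_1 ((d1:ℝ) - 2) ((d2:ℝ) - (d1:ℝ)) * k + B19_2 ((d1:ℝ) - 2) ((d2:ℝ) - (d1:ℝ)) * k^2 + B19_3 ((d1:ℝ) - 2) ((d2:ℝ) - (d1:ℝ)) * k^3)) :=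
    mul_pos hC (mul_pos (by linarith : (0:ℝ) < 1 - k) hH)
  have key : ((4*(d1:ℝ)^2*((d1:ℝ) - 1)*(2*(d2:ℝ)^2*k^2 + (d2:ℝ)*k^2 + 4*(d1:ℝ)*(d2:ℝ)*k + 2*(d1:ℝ)*k + 2*(d1:ℝ)^2)^2) * A - (((d2:ℝ) - 1)^2 * k * (d2:ℝ) * (4*(d1:ℝ) + 3*(d2:ℝ)*k) * (4*((d1:ℝ) - 1)*((d1:ℝ) + (d2:ℝ)*k)^2 + (d2:ℝ)^2*k^2))) * (4*(d1:ℝ)^2*((d1:ℝ) - 1)*(2*(d2:ℝ)^2 + (d2:ℝ) + 4*(d1:ℝ)*(d2:ℝ) + 2*(d1:ℝ) + 2*(d1:ℝ)^2)^2)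
      = (4*(d1:ℝ)^2*((d1:ℝ) - 1)*(2*(d2:ℝ)^2*k^2 + (d2:ℝ)*k^2 + 4*(d1:ℝ)*(d2:ℝ)*k + 2*(d1:ℝ)*k + 2*(d1:ℝ)^2)^2) * (A * (4*(d1:ℝ)^2*((d1:ℝ) - 1)*(2*(d2:ℝ)^2 + (d2:ℝ) + 4*(d1:ℝ)*(d2:ℝ) + 2*(d1:ℝ) + 2*(d1:ℝ)^2)^2) - (((d2:ℝ) - 1)^2 * (d2:ℝ) * (4*(d1:ℝ) + 3*(d2:ℝ)) * (4*((d1:ℝ) - 1)*((d1:ℝ) + (d2:ℝ))^2 + (d2:ℝ)^2))) + 4*(d1:ℝ)^2*((d1:ℝ) - 1)*(d2:ℝ)*((d2:ℝ) - 1)^2 * ((1 - k) * (B19_0 ((d1:ℝ) - 2) ((d2:ℝ) - (d1:ℝ)) + B19_1 ((d1:ℝ) - 2) ((d2:ℝ) - (d1:ℝ)) * k + B19_2 ((d1:ℝ) - 2) ((d2:ℝ) - (d1:ℝ)) * k^2 + B19_3 ((d1:ℝ) - 2) ((d2:ℝ) - (d1:ℝ)) * k^3)) := by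
    simp only [B19_0, B19_1, B19_2, B19_3]
    ring
  have key2 : (0:ℝ) < ((4*(d1:ℝ)^2*((d1:ℝ) - 1)*(2*(d2:ℝ)^2*k^2 + (d2:ℝ)*k^2 + 4*(d1:ℝ)*(d2:ℝ)*k + 2*(d1:ℝ)*k + 2*(d1:ℝ)^2)^2) * A - (((d2:ℝ) - 1)^2 * k * (d2:ℝ) * (4*(d1:ℝ) + 3*(d2:ℝ)*k) * (4*((d1:ℝ) - 1)*((d1:ℝ) + (d2:ℝ)*k)^2 + (d2:ℝ)^2*k^2))) * (4*(d1:ℝ)^2*((d1:ℝ) - 1)*(2*(d2:ℝ)^2 + (d2:ℝ) + 4*(d1:ℝ)*(d2:ℝ) + 2*(d1:ℝ) + 2*(d1:ℝ)^2)^2) := by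
    rw [key]
    exact add_pos_of_nonneg_of_pos (mul_nonneg hr1k.le (by linarith)) hF
  have key3 : (0:ℝ) < (((4*(d1:ℝ)^2*((d1:ℝ) - 1)*(2*(d2:ℝ)^2*k^2 + (d2:ℝ)*k^2 + 4*(d1:ℝ)*(d2:ℝ)*k + 2*(d1:ℝ)*k + 2*(d1:ℝ)^2)^2) * A - (((d2:ℝ) - 1)^2 * k * (d2:ℝ) * (4*(d1:ℝ) + 3*(d2:ℝ)*k) * (4*((d1:ℝ) - 1)*((d1:ℝ) + (d2:ℝ)*k)^2 + (d2:ℝ)^2*k^2))) * (4*(d1:ℝ)^2*((d1:ℝ) - 1)*(2*(d2:ℝ)^2 + (d2:ℝ) + 4*(d1:ℝ)*(d2:ℝ) + 2*(d1:ℝ) + 2*(d1:ℝ)^2)^2)) / (4*(d1:ℝ)^2*((d1:ℝ) - 1)*(2*(d2:ℝ)^2 + (d2:ℝ) + 4*(d1:ℝ)*(d2:ℝ) + 2*(d1:ℝ) + 2*(d1:ℝ)^2)^2) := div_pos key2 hr11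
  rw [mul_div_assoc, div_self (ne_of_gt hr11), mul_one] at key3
  linarith [key3]
end
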